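/- arXiv:2105.02260 — 6 statements merged into one kernel-verified Lean document; each statement's English description precedes it below -/
import Mathlib

section
/- Let h ≥ 1, J ≥ 1, let ν_1,…,ν_J be pairwise distinct positive reals, and let v_1,…,v_J, w_1,…,w_J ∈ ℝ^h. Define σ : ℝ → ℝ^h by σ(t) = Σ_{j=1}^J ( v_j·cos(ν_j t) + w_j·sin(ν_j t) ). If the vectors v_1,…,v_J, w_1,…,w_J span ℝ^h (equivalently, for every nonzero α ∈ ℝ^h the scalar signal α^⊺σ is a nontrivial finite linear combination of sinusoids with nonzero, pairwise distinct frequencies), then σ is persistently exciting on [0, ∞). -/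
open MeasureTheory

/-- The matrix `∫_t^{t+T} σ(τ)σ(τ)ᵀ dτ`, computed entrywise. -/
noncomputable def peMatrix {h : ℕ} (σ : ℝ → Fin h → ℝ) (t T : ℝ) : Matrix (Fin h) (Fin h) ℝ :=
  Matrix.of fun i j => ∫ τ in t..(t + T), σ τ i * σ τ j

/-- `σ` is persistently exciting on `[t₀, ∞)`: there are `α, T > 0` such that
`∫_t^{t+T} σσᵀ dτ − α·I` is positive semidefinite for all `t ≥ t₀`. -/
def IsPE {h : ℕ} (σ : ℝ → Fin h → ℝ) (t₀ : ℝ) : Prop :=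
  ∃ α T : ℝ, 0 < α ∧ 0 < T ∧ ∀ t ≥ t₀,
    (peMatrix σ t T - α • (1 : Matrix (Fin h) (Fin h) ℝ)).PosSemidef

/-!
For `x ∈ ℝ^h`, `xᵀ (∫ σσᵀ) x = ∫ (xᵀσ)²`, and `xᵀσ = ∑ⱼ (aⱼ cos νⱼτ + bⱼ sin νⱼτ)` with
`aⱼ = x·vⱼ`, `bⱼ = x·wⱼ`. Expanding the square by the product-to-sum formulas, the terms with
`j = k` contribute `T/2 · Q(x)`, where `Q(x) = ∑ⱼ (aⱼ² + bⱼ²)`, and every other term is the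
integral of a sinusoid of nonzero frequency `νⱼ ± νₖ`, bounded independently of the window by a
multiple of `Q(x)`. Hence over a long enough window `∫ (xᵀσ)² ≥ Q(x)`, and `Q(x) ≥ c |x|²` with
`c > 0` because the `vⱼ, wⱼ` span `ℝ^h`.
-/

open Real Matrix

noncomputable def sinusoid (a b ω τ : ℝ) : ℝ := a * cos (ω * τ) + b * sin (ω * τ)

@[fun_prop]
lemma continuous_sinusoid (a b ω : ℝ) : Continuous (sinusoid a b ω) := by
  unfold sinusoid; fun_prop

lemma sinusoid_mul_sinusoid (A B C D p q τ : ℝ) :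
    sinusoid A B p τ * sinusoid C D q τ =
      (sinusoid (A * C + B * D) (B * C - A * D) (p - q) τ +
        sinusoid (A * C - B * D) (B * C + A * D) (p + q) τ) / 2 := by
  simp only [sinusoid, sub_mul, add_mul, cos_sub, cos_add, sin_sub, sin_add]
  ring

lemma dotProduct_sum_sinusoid {n ι : Type*} [Fintype n] [Fintype ι] (x : n → ℝ)
    (v w : ι → n → ℝ) (ν : ι → ℝ) (τ : ℝ) :
    x ⬝ᵥ (fun i => ∑ j, sinusoid (v j i) (w j i) (ν j) τ) =
      ∑ j, sinusoid (x ⬝ᵥ v j) (x ⬝ᵥ w j) (ν j) τ := by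
  simp only [dotProduct, sinusoid, Finset.mul_sum, Finset.sum_mul]
  rw [Finset.sum_comm]
  exact Finset.sum_congr rfl fun j _ => by
    rw [← Finset.sum_add_distrib]
    exact Finset.sum_congr rfl fun i _ => by ring

lemma abs_integral_cos_mul_le {ω : ℝ} (hω : ω ≠ 0) (t₁ t₂ : ℝ) :
    |∫ τ in t₁..t₂, cos (ω * τ)| ≤ 2 * |ω|⁻¹ := by
  rw [intervalIntegral.integral_comp_mul_left (fun x => cos x) hω, integral_cos, smul_eq_mul,
    abs_mul, abs_inv, mul_comm]
  gcongr
  exact (abs_sub _ _).trans (by linarith [abs_sin_le_one (ω * t₂), abs_sin_le_one (ω * t₁)])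

lemma abs_integral_sin_mul_le {ω : ℝ} (hω : ω ≠ 0) (t₁ t₂ : ℝ) :
    |∫ τ in t₁..t₂, sin (ω * τ)| ≤ 2 * |ω|⁻¹ := by
  rw [intervalIntegral.integral_comp_mul_left (fun x => sin x) hω, integral_sin, smul_eq_mul,
    abs_mul, abs_inv, mul_comm]
  gcongr
  exact (abs_sub _ _).trans (by linarith [abs_cos_le_one (ω * t₂), abs_cos_le_one (ω * t₁)])

/-- At `ω = 0` both sides vanish, the right one through the junk value `0⁻¹ = 0`. -/
lemma abs_integral_sinusoid_sub_le (a b ω t₁ t₂ : ℝ) :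
    |(∫ τ in t₁..t₂, sinusoid a b ω τ) - (if ω = 0 then a * (t₂ - t₁) else 0)| ≤
      2 * (|a| + |b|) * |ω|⁻¹ := by
  by_cases hω : ω = 0
  · subst hω
    simp [sinusoid, mul_comm]
  have hcos := abs_integral_cos_mul_le hω t₁ t₂
  have hsin := abs_integral_sin_mul_le hω t₁ t₂
  rw [if_neg hω, sub_zero]
  unfold sinusoid
  rw [intervalIntegral.integral_add (by apply Continuous.intervalIntegrable; fun_prop)
      (by apply Continuous.intervalIntegrable; fun_prop),
    intervalIntegral.integral_const_mul, intervalIntegral.integral_const_mul]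
  calc _ ≤ |a| * |∫ τ in t₁..t₂, cos (ω * τ)| + |b| * |∫ τ in t₁..t₂, sin (ω * τ)| := by
        rw [← abs_mul, ← abs_mul]; exact abs_add_le _ _
    _ ≤ |a| * (2 * |ω|⁻¹) + |b| * (2 * |ω|⁻¹) := by gcongr
    _ = _ := by ring

lemma abs_add_abs_le_sum_sq (A B C D : ℝ) :
    |A * C + B * D| + |B * C - A * D| ≤ A ^ 2 + B ^ 2 + C ^ 2 + D ^ 2 := by
  have key : (|A * C + B * D| + |B * C - A * D|) ^ 2 ≤ 2 * ((A ^ 2 + B ^ 2) * (C ^ 2 + D ^ 2)) := by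
    nlinarith [sq_abs (A * C + B * D), sq_abs (B * C - A * D),
      sq_nonneg (|A * C + B * D| - |B * C - A * D|)]
  nlinarith [sq_nonneg (A ^ 2 + B ^ 2 - C ^ 2 - D ^ 2), abs_nonneg (A * C + B * D),
    abs_nonneg (B * C - A * D)]

lemma abs_integral_sinusoid_mul_sinusoid_sub_le (A B C D : ℝ) {p q : ℝ} (hpq : p + q ≠ 0)
    (t₁ t₂ : ℝ) :
    |(∫ τ in t₁..t₂, sinusoid A B p τ * sinusoid C D q τ) -
        (if p = q then (A * C + B * D) * (t₂ - t₁) / 2 else 0)| ≤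
      (|p - q|⁻¹ + |p + q|⁻¹) * (A ^ 2 + B ^ 2 + C ^ 2 + D ^ 2) := by
  set S := A ^ 2 + B ^ 2 + C ^ 2 + D ^ 2
  have hdiff := abs_integral_sinusoid_sub_le (A * C + B * D) (B * C - A * D) (p - q) t₁ t₂
  have hsum := abs_integral_sinusoid_sub_le (A * C - B * D) (B * C + A * D) (p + q) t₁ t₂
  simp only [sub_eq_zero] at hdiff
  simp only [if_neg hpq, sub_zero] at hsum
  have hS₁ : |A * C + B * D| + |B * C - A * D| ≤ S := abs_add_abs_le_sum_sq A B C D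
  have hS₂ : |A * C - B * D| + |B * C + A * D| ≤ S := by
    simpa only [mul_neg, sub_neg_eq_add, ← sub_eq_add_neg, neg_sq] using
      abs_add_abs_le_sum_sq A B C (-D)
  simp_rw [sinusoid_mul_sinusoid]
  rw [intervalIntegral.integral_div, intervalIntegral.integral_add
      (by apply Continuous.intervalIntegrable; fun_prop)
      (by apply Continuous.intervalIntegrable; fun_prop)]
  set I₁ := ∫ τ in t₁..t₂, sinusoid (A * C + B * D) (B * C - A * D) (p - q) τ
  set I₂ := ∫ τ in t₁..t₂, sinusoid (A * C - B * D) (B * C + A * D) (p + q) τ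
  set E := if p = q then (A * C + B * D) * (t₂ - t₁) else 0
  have hE : (if p = q then (A * C + B * D) * (t₂ - t₁) / 2 else 0) = E / 2 := by
    simp only [E]; split_ifs <;> ring
  calc |(I₁ + I₂) / 2 - (if p = q then (A * C + B * D) * (t₂ - t₁) / 2 else 0)|
      = |(I₁ - E) + I₂| / 2 := by
        rw [hE, show (I₁ + I₂) / 2 - E / 2 = ((I₁ - E) + I₂) / 2 by ring, abs_div, abs_two]
    _ ≤ (|I₁ - E| + |I₂|) / 2 := by gcongr; exact abs_add_le _ _
    _ ≤ (2 * S * |p - q|⁻¹ + 2 * S * |p + q|⁻¹) / 2 := by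
        gcongr
        · exact hdiff.trans (by gcongr)
        · exact hsum.trans (by gcongr)
    _ = (|p - q|⁻¹ + |p + q|⁻¹) * S := by ring

lemma exists_abs_integral_sq_sum_sinusoid_sub_le {ι : Type*} [Fintype ι] {ν : ι → ℝ}
    (hν : Function.Injective ν) (hν_add : ∀ j k, ν j + ν k ≠ 0) :
    ∃ K ≥ 0, ∀ (a b : ι → ℝ) (t₁ t₂ : ℝ),
      |(∫ τ in t₁..t₂, (∑ j, sinusoid (a j) (b j) (ν j) τ) ^ 2) -
          (t₂ - t₁) / 2 * ∑ j, (a j ^ 2 + b j ^ 2)| ≤ K * ∑ j, (a j ^ 2 + b j ^ 2) := by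
  classical
  refine ⟨2 * ∑ j, ∑ k, (|ν j - ν k|⁻¹ + |ν j + ν k|⁻¹), by positivity, fun a b t₁ t₂ => ?_⟩
  set Q := ∑ j, (a j ^ 2 + b j ^ 2)
  have hQ : ∀ j, a j ^ 2 + b j ^ 2 ≤ Q := fun j =>
    Finset.single_le_sum (f := fun j => a j ^ 2 + b j ^ 2) (fun j _ => by positivity)
      (Finset.mem_univ j)
  have hexpand : (∫ τ in t₁..t₂, (∑ j, sinusoid (a j) (b j) (ν j) τ) ^ 2) =
      ∑ j, ∑ k, ∫ τ in t₁..t₂, sinusoid (a j) (b j) (ν j) τ * sinusoid (a k) (b k) (ν k) τ := by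
    simp_rw [sq, Finset.sum_mul_sum]
    rw [intervalIntegral.integral_finsetSum fun j _ =>
      (by apply Continuous.intervalIntegrable; fun_prop)]
    refine Finset.sum_congr rfl fun j _ => ?_
    exact intervalIntegral.integral_finsetSum fun k _ =>
      (by apply Continuous.intervalIntegrable; fun_prop)
  have hdiag : (t₂ - t₁) / 2 * Q = ∑ j, ∑ k,
      (if ν j = ν k then (a j * a k + b j * b k) * (t₂ - t₁) / 2 else 0) := by
    simp_rw [hν.eq_iff, Finset.sum_ite_eq, Finset.mem_univ, if_true, Q, Finset.mul_sum]
    exact Finset.sum_congr rfl fun j _ => by ring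
  rw [hexpand, hdiag, ← Finset.sum_sub_distrib]
  calc _ ≤ ∑ j, ∑ k, |(∫ τ in t₁..t₂, sinusoid (a j) (b j) (ν j) τ * sinusoid (a k) (b k) (ν k) τ)
          - (if ν j = ν k then (a j * a k + b j * b k) * (t₂ - t₁) / 2 else 0)| := by
        refine (Finset.abs_sum_le_sum_abs _ _).trans (Finset.sum_le_sum fun j _ => ?_)
        rw [← Finset.sum_sub_distrib]
        exact Finset.abs_sum_le_sum_abs _ _
    _ ≤ ∑ j, ∑ k, (|ν j - ν k|⁻¹ + |ν j + ν k|⁻¹) * (2 * Q) := by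
        gcongr with j _ k _
        refine (abs_integral_sinusoid_mul_sinusoid_sub_le _ _ _ _ (hν_add j k) t₁ t₂).trans ?_
        gcongr
        linarith [hQ j, hQ k]
    _ = _ := by simp_rw [← Finset.sum_mul]; ring

lemma exists_pos_mul_dotProduct_self_le_sum_sq {n ι : Type*} [Fintype n] [Fintype ι]
    {u : ι → n → ℝ} (hu : Submodule.span ℝ (Set.range u) = ⊤) :
    ∃ c > 0, ∀ x : n → ℝ, c * (x ⬝ᵥ x) ≤ ∑ i, (x ⬝ᵥ u i) ^ 2 := by
  classical
  set L := toLpLin 2 2 (of u)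
  have hL : ∀ x, ‖L (WithLp.toLp 2 x)‖ ^ 2 = ∑ i, (x ⬝ᵥ u i) ^ 2 := fun x => by
    simp [L, EuclideanSpace.real_norm_sq_eq, mulVec, dotProduct_comm]
  have hker : LinearMap.ker L = ⊥ := by
    refine LinearMap.ker_eq_bot'.mpr fun y hy => ?_
    have hdot : ∀ i, u i ⬝ᵥ WithLp.ofLp y = 0 := fun i => by
      simpa [L, mulVec] using congr(WithLp.ofLp $hy i)
    have hfun : dotProductEquiv ℝ n (WithLp.ofLp y) = 0 :=
      LinearMap.ext_on_range hu fun i => by simpa [dotProduct_comm] using hdot i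
    have hself : WithLp.ofLp y ⬝ᵥ WithLp.ofLp y = 0 := LinearMap.congr_fun hfun (WithLp.ofLp y)
    simpa using dotProduct_self_eq_zero.mp hself
  obtain ⟨K, hK, hanti⟩ := L.exists_antilipschitzWith hker
  refine ⟨((K : ℝ) ^ 2)⁻¹, by positivity, fun x => ?_⟩
  have hbound := ZeroHomClass.bound_of_antilipschitz L hanti (WithLp.toLp 2 x)
  have hx : ‖WithLp.toLp 2 x‖ ^ 2 = x ⬝ᵥ x := by
    rw [EuclideanSpace.real_norm_sq_eq]; simp [dotProduct, sq]
  rw [← hx, ← hL, inv_mul_le_iff₀ (by positivity), ← mul_pow]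
  gcongr

lemma peMatrix_isHermitian {h : ℕ} (σ : ℝ → Fin h → ℝ) (t T : ℝ) :
    (peMatrix σ t T).IsHermitian := by
  ext i j
  simp only [conjTranspose_apply, peMatrix, of_apply, star_trivial, mul_comm]

lemma dotProduct_peMatrix_mulVec {h : ℕ} {σ : ℝ → Fin h → ℝ} {t T : ℝ}
    (hσ : ∀ i j, IntervalIntegrable (fun τ => σ τ i * σ τ j) volume t (t + T)) (x : Fin h → ℝ) :
    x ⬝ᵥ (peMatrix σ t T *ᵥ x) = ∫ τ in t..(t + T), (x ⬝ᵥ σ τ) ^ 2 := by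
  have hsq : ∀ τ, (x ⬝ᵥ σ τ) ^ 2 = ∑ i, ∑ j, x i * x j * (σ τ i * σ τ j) := fun τ => by
    simp only [dotProduct, sq, Finset.sum_mul_sum]
    exact Finset.sum_congr rfl fun i _ => Finset.sum_congr rfl fun j _ => by ring
  simp_rw [hsq]
  rw [intervalIntegral.integral_finsetSum fun i _ =>
    by simpa only [Finset.sum_fn] using IntervalIntegrable.sum _ fun j _ => (hσ i j).const_mul _]
  simp only [dotProduct, mulVec, peMatrix, of_apply, Finset.mul_sum]
  refine Finset.sum_congr rfl fun i _ => ?_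
  rw [intervalIntegral.integral_finsetSum fun j _ => (hσ i j).const_mul _]
  exact Finset.sum_congr rfl fun j _ => by rw [intervalIntegral.integral_const_mul]; ring

lemma isPE_of_forall_le_integral {h : ℕ} {σ : ℝ → Fin h → ℝ} {t₀ : ℝ} (hσ : Continuous σ)
    (hPE : ∃ α T : ℝ, 0 < α ∧ 0 < T ∧ ∀ t ≥ t₀, ∀ x : Fin h → ℝ,
      α * (x ⬝ᵥ x) ≤ ∫ τ in t..(t + T), (x ⬝ᵥ σ τ) ^ 2) :
    IsPE σ t₀ := by
  obtain ⟨α, T, hα, hT, hle⟩ := hPE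
  refine ⟨α, T, hα, hT, fun t ht => ?_⟩
  have hσ' : ∀ i j, IntervalIntegrable (fun τ => σ τ i * σ τ j) volume t (t + T) := fun i j =>
    (((continuous_apply i).comp hσ).mul ((continuous_apply j).comp hσ)).intervalIntegrable _ _
  refine PosSemidef.of_dotProduct_mulVec_nonneg
    ((peMatrix_isHermitian σ t T).sub (isHermitian_one.smul (IsSelfAdjoint.all α))) fun x => ?_
  rw [star_trivial, sub_mulVec, dotProduct_sub, smul_mulVec, one_mulVec,
    dotProduct_smul, smul_eq_mul, sub_nonneg, dotProduct_peMatrix_mulVec hσ']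
  exact hle t ht x

theorem stmt_2_general (h J : ℕ)
    (ν : Fin J → ℝ) (hνpos : ∀ j, 0 < ν j) (hνinj : Function.Injective ν)
    (v w : Fin J → Fin h → ℝ)
    (hspan : Submodule.span ℝ (Set.range v ∪ Set.range w) = ⊤) :
    IsPE (fun t i => ∑ j : Fin J, (v j i * Real.cos (ν j * t) + w j i * Real.sin (ν j * t)))
      0 := by
  show IsPE (fun t i => ∑ j, sinusoid (v j i) (w j i) (ν j) t) 0
  obtain ⟨K, hK, hsinusoids⟩ := exists_abs_integral_sq_sum_sinusoid_sub_le hνinj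
    fun j k => (add_pos (hνpos j) (hνpos k)).ne'
  obtain ⟨c, hc, hcoercive⟩ := exists_pos_mul_dotProduct_self_le_sum_sq (u := Sum.elim v w)
    (by rwa [Set.Sum.elim_range])
  refine isPE_of_forall_le_integral (by fun_prop) ⟨c, 2 * K + 2, hc, by positivity, ?_⟩
  intro t _ x
  simp_rw [dotProduct_sum_sinusoid]
  set Q := ∑ j, ((x ⬝ᵥ v j) ^ 2 + (x ⬝ᵥ w j) ^ 2)
  have hQ : c * (x ⬝ᵥ x) ≤ Q := by
    simpa [Q, Fintype.sum_sum_type, Finset.sum_add_distrib] using hcoercive x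
  have herr := (abs_le.mp (hsinusoids (x ⬝ᵥ v ·) (x ⬝ᵥ w ·) t (t + (2 * K + 2)))).1
  have hwindow : (t + (2 * K + 2) - t) / 2 * Q - K * Q = Q := by ring
  linarith

/-- Proposition 1 of the paper for vector trigonometric signals:
if the coefficient vectors of a vector multisine with pairwise distinct positive
frequencies span ℝ^h, the signal is persistently exciting on `[0, ∞)`. -/
theorem stmt_2 (h J : ℕ) (hh : 1 ≤ h) (hJ : 1 ≤ J)
    (ν : Fin J → ℝ) (hνpos : ∀ j, 0 < ν j) (hνinj : Function.Injective ν)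
    (v w : Fin J → Fin h → ℝ)
    (hspan : Submodule.span ℝ (Set.range v ∪ Set.range w) = ⊤) :
    IsPE (fun t i => ∑ j : Fin J, (v j i * Real.cos (ν j * t) + w j i * Real.sin (ν j * t)))
      0 :=
  stmt_2_general h J ν hνpos hνinj v w hspan
end

section
/- Let L, K ∈ ℕ with L + K ≥ 1, let a_1,…,a_L and c_1,…,c_K be nonzero reals, and let μ_1,…,μ_L and ν_1,…,ν_K be nonzero reals such that |μ_{l₁}| ≠ |μ_{l₂}| for all l₁ ≠ l₂ and |ν_{k₁}| ≠ |ν_{k₂}| for all k₁ ≠ k₂. Define σ : ℝ → ℝ by σ(t) = Σ_{l=1}^L a_l·cos(μ_l t) + Σ_{k=1}^K c_k·sin(ν_k t). Then there exist constants α, T > 0 such that for all t ∈ ℝ: ∫_t^{t+T} σ(τ)² dτ ≥ α. -/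
/-!
Write `σ = ∑ᵢ wᵢ φᵢ`, the modes `φᵢ` being the functions `cos (μₗ ·)` and `sin (νₖ ·)`. By the
product-to-sum formulas, `φᵢ φⱼ - δᵢⱼ / 2` is a combination of `cos (ω ·)` with `ω ≠ 0` and of
`sin (ω ·)`: the frequencies `μₗ ± μₗ'`, `νₖ ± νₖ'` that occur are nonzero because the absolute
values are distinct and the frequencies nonzero. Such functions have bounded antiderivatives, so
`σ² - S / 2` has one too, where `S = ∑ wᵢ² > 0`; if it is bounded by `C`, then
`∫ₜ^{t+T} σ² ≥ T S / 2 - 2C`, which equals `1` for `T = (4C + 2) / S`.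
-/

open MeasureTheory

def HasBoundedAntideriv (f : ℝ → ℝ) : Prop :=
  ∃ F : ℝ → ℝ, (∀ x, HasDerivAt F (f x) x) ∧ ∃ C, ∀ x, |F x| ≤ C

namespace HasBoundedAntideriv

theorem zero : HasBoundedAntideriv 0 :=
  ⟨0, fun _ => hasDerivAt_const _ _, 0, fun _ => by simp⟩

theorem congr {f g : ℝ → ℝ} (hf : HasBoundedAntideriv f) (hfg : ∀ x, f x = g x) :
    HasBoundedAntideriv g :=
  funext hfg ▸ hf

theorem add {f g : ℝ → ℝ} (hf : HasBoundedAntideriv f) (hg : HasBoundedAntideriv g) :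
    HasBoundedAntideriv (f + g) := by
  obtain ⟨F, hF, C, hC⟩ := hf
  obtain ⟨G, hG, D, hD⟩ := hg
  exact ⟨F + G, fun x => (hF x).add (hG x), C + D,
    fun x => (abs_add_le _ _).trans (add_le_add (hC x) (hD x))⟩

theorem sub {f g : ℝ → ℝ} (hf : HasBoundedAntideriv f) (hg : HasBoundedAntideriv g) :
    HasBoundedAntideriv (f - g) := by
  obtain ⟨F, hF, C, hC⟩ := hf
  obtain ⟨G, hG, D, hD⟩ := hg
  exact ⟨F - G, fun x => (hF x).sub (hG x), C + D,
    fun x => (abs_sub _ _).trans (add_le_add (hC x) (hD x))⟩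

theorem const_mul {f : ℝ → ℝ} (hf : HasBoundedAntideriv f) (r : ℝ) :
    HasBoundedAntideriv fun x => r * f x := by
  obtain ⟨F, hF, C, hC⟩ := hf
  refine ⟨fun x => r * F x, fun x => (hF x).const_mul r, |r| * C, fun x => ?_⟩
  rw [abs_mul]
  exact mul_le_mul_of_nonneg_left (hC x) (abs_nonneg r)

theorem sum {ι : Type*} (s : Finset ι) {f : ι → ℝ → ℝ}
    (hf : ∀ i ∈ s, HasBoundedAntideriv (f i)) :
    HasBoundedAntideriv fun x => ∑ i ∈ s, f i x := by
  rw [← Finset.sum_fn]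
  exact Finset.sum_induction f _ (fun _ _ => add) zero hf

end HasBoundedAntideriv

theorem hasBoundedAntideriv_cos_mul {ω : ℝ} (hω : ω ≠ 0) :
    HasBoundedAntideriv fun x => Real.cos (ω * x) := by
  refine ⟨fun x => Real.sin (ω * x) / ω, fun x => ?_, 1 / |ω|, fun x => ?_⟩
  · have h := ((hasDerivAt_id' x).const_mul ω).sin.div_const ω
    rw [mul_one, mul_div_cancel_right₀ _ hω] at h
    exact h
  · rw [abs_div]
    gcongr
    exact Real.abs_sin_le_one _

theorem hasBoundedAntideriv_sin_mul (ω : ℝ) :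
    HasBoundedAntideriv fun x => Real.sin (ω * x) := by
  rcases eq_or_ne ω 0 with rfl | hω
  · exact HasBoundedAntideriv.zero.congr fun x => by simp
  refine ⟨fun x => -Real.cos (ω * x) / ω, fun x => ?_, 1 / |ω|, fun x => ?_⟩
  · have h := ((hasDerivAt_id' x).const_mul ω).cos.neg.div_const ω
    rw [mul_one, neg_mul, neg_neg, mul_div_cancel_right₀ _ hω] at h
    exact h
  · rw [abs_div, abs_neg]
    gcongr
    exact Real.abs_cos_le_one _

section ProductToSum

variable {μ ν : ℝ}

theorem hasBoundedAntideriv_cos_mul_mul_cos_mul (h : |μ| ≠ |ν|) :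
    HasBoundedAntideriv fun x => Real.cos (μ * x) * Real.cos (ν * x) := by
  have hsub : μ - ν ≠ 0 := fun h' => h (by rw [sub_eq_zero.mp h'])
  have hadd : μ + ν ≠ 0 := fun h' => h (by rw [eq_neg_of_add_eq_zero_left h', abs_neg])
  refine (((hasBoundedAntideriv_cos_mul hsub).add (hasBoundedAntideriv_cos_mul hadd)).const_mul
    (1 / 2)).congr fun x => ?_
  simp only [Pi.add_apply, sub_mul, add_mul, Real.cos_sub, Real.cos_add]
  ring

theorem hasBoundedAntideriv_sin_mul_mul_sin_mul (h : |μ| ≠ |ν|) :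
    HasBoundedAntideriv fun x => Real.sin (μ * x) * Real.sin (ν * x) := by
  have hsub : μ - ν ≠ 0 := fun h' => h (by rw [sub_eq_zero.mp h'])
  have hadd : μ + ν ≠ 0 := fun h' => h (by rw [eq_neg_of_add_eq_zero_left h', abs_neg])
  refine (((hasBoundedAntideriv_cos_mul hsub).sub (hasBoundedAntideriv_cos_mul hadd)).const_mul
    (1 / 2)).congr fun x => ?_
  simp only [Pi.sub_apply, sub_mul, add_mul, Real.cos_sub, Real.cos_add]
  ring

theorem hasBoundedAntideriv_cos_mul_mul_sin_mul (μ ν : ℝ) :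
    HasBoundedAntideriv fun x => Real.cos (μ * x) * Real.sin (ν * x) := by
  refine (((hasBoundedAntideriv_sin_mul (μ + ν)).sub
    (hasBoundedAntideriv_sin_mul (μ - ν))).const_mul (1 / 2)).congr fun x => ?_
  simp only [Pi.sub_apply, sub_mul, add_mul, Real.sin_sub, Real.sin_add]
  ring

theorem hasBoundedAntideriv_cos_mul_sq_sub (h : μ ≠ 0) :
    HasBoundedAntideriv fun x => Real.cos (μ * x) * Real.cos (μ * x) - 1 / 2 := by
  refine ((hasBoundedAntideriv_cos_mul (mul_ne_zero two_ne_zero h)).const_mul (1 / 2)).congr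
    fun x => ?_
  rw [mul_assoc, Real.cos_two_mul]
  ring

theorem hasBoundedAntideriv_sin_mul_sq_sub (h : μ ≠ 0) :
    HasBoundedAntideriv fun x => Real.sin (μ * x) * Real.sin (μ * x) - 1 / 2 := by
  refine ((hasBoundedAntideriv_cos_mul (mul_ne_zero two_ne_zero h)).const_mul (-1 / 2)).congr
    fun x => ?_
  rw [mul_assoc, Real.cos_two_mul, Real.cos_sq']
  ring

end ProductToSum

theorem hasBoundedAntideriv_sq_sum_sub {ι : Type*} [Fintype ι] [DecidableEq ι]
    (φ : ι → ℝ → ℝ) (m : ℝ)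
    (hφ : ∀ i j, HasBoundedAntideriv fun x => φ i x * φ j x - if i = j then m else 0)
    (w : ι → ℝ) :
    HasBoundedAntideriv fun x => (∑ i, w i * φ i x) ^ 2 - m * ∑ i, w i ^ 2 := by
  refine (HasBoundedAntideriv.sum Finset.univ fun i _ => HasBoundedAntideriv.sum Finset.univ
    fun j _ => (hφ i j).const_mul (w i * w j)).congr fun x => ?_
  rw [sq, Finset.sum_mul_sum, Finset.mul_sum]
  simp only [mul_sub, Finset.sum_sub_distrib, mul_ite, mul_zero, Finset.sum_ite_eq,
    Finset.mem_univ, if_true]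
  congr 1
  · exact Finset.sum_congr rfl fun i _ => Finset.sum_congr rfl fun j _ => by ring
  · exact Finset.sum_congr rfl fun i _ => by ring

theorem exists_pos_le_integral_of_hasBoundedAntideriv_sub {f : ℝ → ℝ} (hf : Continuous f)
    {m : ℝ} (hm : 0 < m) (h : HasBoundedAntideriv fun x => f x - m) :
    ∃ α T : ℝ, 0 < α ∧ 0 < T ∧ ∀ t, α ≤ ∫ x in t..(t + T), f x := by
  obtain ⟨F, hF, C, hC⟩ := h
  have hC0 : 0 ≤ C := (abs_nonneg _).trans (hC 0)
  refine ⟨1, (2 * C + 1) / m, one_pos, by positivity, fun t => ?_⟩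
  set T := (2 * C + 1) / m
  have hFTC : ∫ x in t..(t + T), (f x - m) = F (t + T) - F t :=
    intervalIntegral.integral_eq_sub_of_hasDerivAt (fun x _ => hF x)
      ((hf.sub continuous_const).intervalIntegrable _ _)
  rw [intervalIntegral.integral_sub (hf.intervalIntegrable _ _) intervalIntegrable_const,
    intervalIntegral.integral_const, smul_eq_mul, add_sub_cancel_left] at hFTC
  have hTm : T * m = 2 * C + 1 := div_mul_cancel₀ _ hm.ne'
  linarith [neg_abs_le (F (t + T)), le_abs_self (F t), hC (t + T), hC t]

noncomputable def trigModes {ι κ : Type*} (μ : ι → ℝ) (ν : κ → ℝ) : ι ⊕ κ → ℝ → ℝ :=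
  Sum.elim (fun i x => Real.cos (μ i * x)) (fun k x => Real.sin (ν k * x))

theorem continuous_trigModes {ι κ : Type*} (μ : ι → ℝ) (ν : κ → ℝ) (p : ι ⊕ κ) :
    Continuous (trigModes μ ν p) := by
  rcases p with i | k <;> simp only [trigModes, Sum.elim_inl, Sum.elim_inr] <;> fun_prop

theorem hasBoundedAntideriv_trigModes_mul_sub {ι κ : Type*} [DecidableEq ι] [DecidableEq κ]
    {μ : ι → ℝ} {ν : κ → ℝ} (hμ0 : ∀ i, μ i ≠ 0) (hν0 : ∀ k, ν k ≠ 0)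
    (hμ : Pairwise fun i j => |μ i| ≠ |μ j|) (hν : Pairwise fun k l => |ν k| ≠ |ν l|)
    (p q : ι ⊕ κ) :
    HasBoundedAntideriv fun x =>
      trigModes μ ν p x * trigModes μ ν q x - if p = q then 1 / 2 else 0 := by
  rcases p with i | k <;> rcases q with j | l <;>
    simp only [trigModes, Sum.elim_inl, Sum.elim_inr, Sum.inl.injEq, Sum.inr.injEq,
      reduceCtorEq, if_false, sub_zero]
  · split_ifs with hij
    · subst hij
      exact hasBoundedAntideriv_cos_mul_sq_sub (hμ0 i)
    · simpa using hasBoundedAntideriv_cos_mul_mul_cos_mul (hμ hij)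
  · exact hasBoundedAntideriv_cos_mul_mul_sin_mul _ _
  · simpa only [mul_comm] using hasBoundedAntideriv_cos_mul_mul_sin_mul (μ j) (ν k)
  · split_ifs with hkl
    · subst hkl
      exact hasBoundedAntideriv_sin_mul_sq_sub (hν0 k)
    · simpa using hasBoundedAntideriv_sin_mul_mul_sin_mul (hν hkl)

/-- scalar persistent excitation underlying Proposition 1: a nontrivial
finite sum of sinusoids with nonzero frequencies, pairwise distinct in absolute value
within each trigonometric family, has uniformly positive energy over windows of fixed
length. -/
theorem stmt_3 (L K : ℕ) (hLK : 1 ≤ L + K)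
    (a : Fin L → ℝ) (c : Fin K → ℝ) (ha : ∀ l, a l ≠ 0) (hc : ∀ k, c k ≠ 0)
    (μ : Fin L → ℝ) (ν : Fin K → ℝ) (hμ0 : ∀ l, μ l ≠ 0) (hν0 : ∀ k, ν k ≠ 0)
    (hμ : ∀ l₁ l₂ : Fin L, l₁ ≠ l₂ → |μ l₁| ≠ |μ l₂|)
    (hν : ∀ k₁ k₂ : Fin K, k₁ ≠ k₂ → |ν k₁| ≠ |ν k₂|) :
    ∃ α T : ℝ, 0 < α ∧ 0 < T ∧ ∀ t : ℝ,
      α ≤ ∫ τ in t..(t + T),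
            ((∑ l : Fin L, a l * Real.cos (μ l * τ))
              + ∑ k : Fin K, c k * Real.sin (ν k * τ)) ^ 2 := by
  set w : Fin L ⊕ Fin K → ℝ := Sum.elim a c
  have hσ : ∀ τ, (∑ l : Fin L, a l * Real.cos (μ l * τ)) + ∑ k : Fin K, c k * Real.sin (ν k * τ)
      = ∑ p, w p * trigModes μ ν p τ := fun τ => by
    simp [w, trigModes, Fintype.sum_sum_type]
  have hw : 0 < ∑ p, w p ^ 2 := by
    have : Nonempty (Fin L ⊕ Fin K) := by
      rcases Nat.eq_zero_or_pos L with rfl | hL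
      · exact ⟨.inr ⟨0, by omega⟩⟩
      · exact ⟨.inl ⟨0, hL⟩⟩
    refine Finset.sum_pos (fun p _ => sq_pos_of_ne_zero ?_) Finset.univ_nonempty
    rcases p with l | k
    exacts [ha l, hc k]
  simp_rw [hσ]
  have hσ_cont : Continuous fun τ => (∑ p, w p * trigModes μ ν p τ) ^ 2 :=
    (continuous_finsetSum _ fun p _ => continuous_const.mul (continuous_trigModes μ ν p)).pow 2
  exact exists_pos_le_integral_of_hasBoundedAntideriv_sub hσ_cont (mul_pos one_half_pos hw)
    (hasBoundedAntideriv_sq_sum_sub (trigModes μ ν) (1 / 2)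
      (hasBoundedAntideriv_trigModes_mul_sub hμ0 hν0 hμ hν) w)
end

section
/- Let φ : ℝ^n → ℝ^h be a monomial basis-function vector, i.e., φ_h̄(x) = f̄_h̄ · ∏_{j=1}^n x_j^{f_{j,h̄}} with f̄_h̄ ∈ ℝ\{0} and exponents f_{j,h̄} ∈ ℕ for each h̄ ∈ {1,…,h}. Let x : ℝ → ℝ^n be continuously differentiable and let ν_1,…,ν_n be nonzero reals; define x̄(t) = (ν_1·x_1(t), …, ν_n·x_n(t)). If the function t ↦ (d/dt) φ(x(t)) is persistently exciting on [t₀, ∞), then the function t ↦ (d/dt) φ(x̄(t)) is persistently exciting on [t₀, ∞). -/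
/-!
Scaling the state by `ν` multiplies each monomial `∏ⱼ xⱼ ^ fⱼ`, hence also its time derivative,
by the nonzero constant `cᵢ = ∏ⱼ νⱼ ^ fⱼ`. With `D = diag c`, the excitation matrix of the scaled
regressor is `D M D`, and if `M ≥ α` and `cᵢ² ≥ ε` then
`D M D - ε α = D (M - α) D + α (D² - ε) ≥ 0`.
-/

open MeasureTheory Matrix

lemma exists_pos_forall_le_of_finite {ι : Type*} [Finite ι] {a : ι → ℝ} (ha : ∀ i, 0 < a i) :
    ∃ ε > 0, ∀ i, ε ≤ a i := by
  rcases isEmpty_or_nonempty ι with _ | _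
  · exact ⟨1, one_pos, isEmptyElim⟩
  · obtain ⟨i₀, hi₀⟩ := Finite.exists_min a
    exact ⟨a i₀, ha i₀, hi₀⟩

lemma peMatrix_const_mul {h : ℕ} (σ : ℝ → Fin h → ℝ) (c : Fin h → ℝ) (t T : ℝ) :
    peMatrix (fun τ i => c i * σ τ i) t T = diagonal c * peMatrix σ t T * diagonal c := by
  ext i j
  simp only [peMatrix, mul_diagonal, diagonal_mul, of_apply]
  rw [← intervalIntegral.integral_const_mul, ← intervalIntegral.integral_mul_const]
  congr 1 with τ
  ring

theorem IsPE.const_mul {h : ℕ} {σ : ℝ → Fin h → ℝ} {t₀ : ℝ} (hσ : IsPE σ t₀) {c : Fin h → ℝ}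
    (hc : ∀ i, c i ≠ 0) : IsPE (fun τ i => c i * σ τ i) t₀ := by
  obtain ⟨α, T, hα, hT, hM⟩ := hσ
  obtain ⟨ε, hε, hεc⟩ := exists_pos_forall_le_of_finite fun i => mul_self_pos.mpr (hc i)
  refine ⟨ε * α, T, by positivity, hT, fun t ht => ?_⟩
  set D := diagonal c
  have hDD : (D * D - ε • 1 : Matrix (Fin h) (Fin h) ℝ).PosSemidef := by
    have : D * D - ε • 1 = diagonal fun i => c i * c i - ε := by
      ext i j
      rcases eq_or_ne i j with rfl | hij <;> simp [D, *]
    exact this ▸ PosSemidef.diagonal fun i => sub_nonneg.mpr (hεc i)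
  have hsplit : peMatrix (fun τ i => c i * σ τ i) t T - (ε * α) • 1
      = D * (peMatrix σ t T - α • 1) * D + α • (D * D - ε • 1) := by
    rw [peMatrix_const_mul]
    simp only [mul_sub, sub_mul, mul_smul_comm, smul_mul_assoc, mul_one, smul_sub, smul_smul,
      mul_comm ε α]
    abel
  have hD : Dᴴ = D := by simp [D]
  rw [hsplit]
  simpa only [hD] using ((hM t ht).mul_mul_conjTranspose_same D).add (hDD.smul hα.le)

theorem stmt_6_general (n h : ℕ) (fbar : Fin h → ℝ)
    (f : Fin h → Fin n → ℕ) (x : ℝ → Fin n → ℝ)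
    (ν : Fin n → ℝ) (hν : ∀ j, ν j ≠ 0) (t₀ : ℝ)
    (hPE : IsPE (fun t i => deriv (fun s => fbar i * ∏ j : Fin n, (x s j) ^ f i j) t) t₀) :
    IsPE (fun t i => deriv (fun s => fbar i * ∏ j : Fin n, (ν j * x s j) ^ f i j) t) t₀ := by
  have hc : ∀ i, ∏ j, ν j ^ f i j ≠ 0 := fun i =>
    Finset.prod_ne_zero_iff.mpr fun j _ => pow_ne_zero _ (hν j)
  convert hPE.const_mul hc using 3 with t i
  rw [← deriv_const_mul_field]
  congr 1 with s
  simp only [mul_pow, Finset.prod_mul_distrib]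
  ring

/-- Lemma 7 of the paper: componentwise nonzero scaling of the state
trajectory preserves persistent excitation of the monomial regressor derivative. -/
theorem stmt_6 (n h : ℕ) (fbar : Fin h → ℝ) (hfbar : ∀ i, fbar i ≠ 0)
    (f : Fin h → Fin n → ℕ) (x : ℝ → Fin n → ℝ) (hx : ContDiff ℝ 1 x)
    (ν : Fin n → ℝ) (hν : ∀ j, ν j ≠ 0) (t₀ : ℝ)
    (hPE : IsPE (fun t i => deriv (fun s => fbar i * ∏ j : Fin n, (x s j) ^ f i j) t) t₀) :
    IsPE (fun t i => deriv (fun s => fbar i * ∏ j : Fin n, (ν j * x s j) ^ f i j) t) t₀ :=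
  stmt_6_general n h fbar f x ν hν t₀ hPE
end

section
/- Let σ̂, ε₁, ε₂ : [0, ∞) → ℝ^h be continuous and bounded. Assume there exist T, α_I > 0 such that σ̂ satisfies the averaged PE condition with constants α_I, T. Assume ‖ε₁(t)‖₂ ≤ ε̄ for all t ≥ 0 with ε̄ < α_I, and ε₂(t) → 0 as t → ∞. Then the signal σ = σ̂ + ε₁ + ε₂ satisfies the averaged PE condition for some constants α', T' > 0. -/
open MeasureTheory

/-- `σ` satisfies the averaged PE condition with constants `αI, T`:
for all `t ≥ 0` and every unit vector `ι`, `(1/T)·∫_t^{t+T} |σ(τ)ᵀι| dτ ≥ αI`. -/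
def AvgPE {h : ℕ} (σ : ℝ → Fin h → ℝ) (αI T : ℝ) : Prop :=
  ∀ t ≥ (0 : ℝ), ∀ ι : Fin h → ℝ, (∑ i, ι i ^ 2) = 1 →
    αI ≤ (1 / T) * ∫ τ in t..(t + T), |∑ i, σ τ i * ι i|

private lemma cs_aux {h : ℕ} (v w : Fin h → ℝ) (hw : (∑ i, w i ^ 2) = 1) :
    |∑ i, v i * w i| ≤ Real.sqrt (∑ i, v i ^ 2) := by
  have h1 : (∑ i, v i * w i) ^ 2 ≤ (∑ i, v i ^ 2) * (∑ i, w i ^ 2) :=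
    Finset.sum_mul_sq_le_sq_mul_sq _ _ _
  rw [hw, mul_one] at h1
  have h2 := Real.sqrt_le_sqrt h1
  rwa [Real.sqrt_sq_eq_abs] at h2

private lemma cont_aux {h : ℕ} (f : ℝ → Fin h → ℝ) (hf : ContinuousOn f (Set.Ici 0))
    (ι : Fin h → ℝ) :
    ContinuousOn (fun τ => |∑ i, f τ i * ι i|) (Set.Ici (0:ℝ)) := by
  apply ContinuousOn.abs
  exact continuousOn_finset_sum _ fun i _ =>
    ((continuous_apply i).comp_continuousOn hf).mul continuousOn_const

private lemma ii_aux {h : ℕ} (f : ℝ → Fin h → ℝ) (hf : ContinuousOn f (Set.Ici 0))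
    (ι : Fin h → ℝ) {a b : ℝ} (ha : 0 ≤ a) (hab : a ≤ b) :
    IntervalIntegrable (fun τ => |∑ i, f τ i * ι i|) volume a b := by
  apply ContinuousOn.intervalIntegrable
  apply (cont_aux f hf ι).mono
  rw [Set.uIcc_of_le hab]
  exact fun x hx => le_trans ha hx.1

/-- first part of the proof of Lemma 8: averaged persistent excitation
survives the addition of a sufficiently small bounded perturbation `ε₁` and an
asymptotically vanishing perturbation `ε₂`. -/
theorem stmt_8 (h : ℕ) (σhat ε₁ ε₂ : ℝ → Fin h → ℝ)
    (hσc : ContinuousOn σhat (Set.Ici 0))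
    (hε₁c : ContinuousOn ε₁ (Set.Ici 0))
    (hε₂c : ContinuousOn ε₂ (Set.Ici 0))
    (hσb : ∃ C : ℝ, ∀ t ≥ (0 : ℝ), ∀ i, |σhat t i| ≤ C)
    (hε₂b : ∃ C : ℝ, ∀ t ≥ (0 : ℝ), ∀ i, |ε₂ t i| ≤ C)
    (T αI : ℝ) (hT : 0 < T) (hαI : 0 < αI) (hPE : AvgPE σhat αI T)
    (εbar : ℝ) (hεbar : ∀ t ≥ (0 : ℝ), Real.sqrt (∑ i, ε₁ t i ^ 2) ≤ εbar)
    (hsmall : εbar < αI)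
    (hε₂0 : Filter.Tendsto (fun t => Real.sqrt (∑ i, ε₂ t i ^ 2)) Filter.atTop (nhds 0)) :
    ∃ α' T' : ℝ, 0 < α' ∧ 0 < T' ∧
      AvgPE (fun t i => σhat t i + ε₁ t i + ε₂ t i) α' T' := by
  set δ : ℝ := (αI - εbar) / 2 with hδdef
  have hδ : 0 < δ := by rw [hδdef]; linarith
  obtain ⟨t₀', ht₀'⟩ := Filter.eventually_atTop.mp (hε₂0.eventually (gt_mem_nhds hδ))
  set t₀ : ℝ := max t₀' 0 with ht₀def
  have ht₀0 : 0 ≤ t₀ := le_max_right _ _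
  set T' : ℝ := t₀ + T with hT'def
  have hT' : 0 < T' := by rw [hT'def]; linarith
  refine ⟨δ * T / T', T', by positivity, hT', ?_⟩
  intro t ht ι hι
  set s : ℝ := t + t₀ with hsdef
  have hs0 : 0 ≤ s := by rw [hsdef]; linarith
  have hsT : s + T = t + T' := by rw [hsdef, hT'def]; ring
  -- the composite signal
  set σ : ℝ → Fin h → ℝ := fun t i => σhat t i + ε₁ t i + ε₂ t i with hσdef
  have hσcont : ContinuousOn σ (Set.Ici 0) := by
    apply ContinuousOn.add (ContinuousOn.add ?_ ?_) ?_ <;>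
      [exact continuousOn_pi.mpr fun i => (continuous_apply i).comp_continuousOn hσc;
       exact continuousOn_pi.mpr fun i => (continuous_apply i).comp_continuousOn hε₁c;
       exact continuousOn_pi.mpr fun i => (continuous_apply i).comp_continuousOn hε₂c]
  -- integrability
  have hts : t ≤ s := by rw [hsdef]; linarith
  have hsb : s ≤ s + T := by linarith
  have hIσ1 : IntervalIntegrable (fun τ => |∑ i, σ τ i * ι i|) volume t s :=
    ii_aux σ hσcont ι ht hts
  have hIσ2 : IntervalIntegrable (fun τ => |∑ i, σ τ i * ι i|) volume s (s + T) :=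
    ii_aux σ hσcont ι hs0 hsb
  have hIA : IntervalIntegrable (fun τ => |∑ i, σhat τ i * ι i|) volume s (s + T) :=
    ii_aux σhat hσc ι hs0 hsb
  -- pointwise lower bound on [s, s+T]
  have hpt : ∀ τ ∈ Set.Icc s (s + T),
      |∑ i, σhat τ i * ι i| - εbar - δ ≤ |∑ i, σ τ i * ι i| := by
    intro τ hτ
    have hτ0 : (0:ℝ) ≤ τ := le_trans hs0 hτ.1
    have hτ₀ : t₀' ≤ τ := le_trans (le_trans (le_max_left _ _) (by linarith : t₀ ≤ s)) hτ.1
    have hB : |∑ i, ε₁ τ i * ι i| ≤ εbar :=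
      le_trans (cs_aux _ _ hι) (hεbar τ hτ0)
    have hC : |∑ i, ε₂ τ i * ι i| ≤ δ :=
      le_trans (cs_aux _ _ hι) (ht₀' τ hτ₀).le
    have hsum : (∑ i, σ τ i * ι i)
        = (∑ i, σhat τ i * ι i) + (∑ i, ε₁ τ i * ι i) + (∑ i, ε₂ τ i * ι i) := by
      rw [hσdef]
      simp only [← Finset.sum_add_distrib]
      congr 1; ext i; ring
    rw [hsum]
    have h1 : |∑ i, σhat τ i * ι i| ≤
        |(∑ i, σhat τ i * ι i) + (∑ i, ε₁ τ i * ι i) + (∑ i, ε₂ τ i * ι i)|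
          + |∑ i, ε₁ τ i * ι i| + |∑ i, ε₂ τ i * ι i| := by
      have h4 := abs_add_le (∑ i, ε₁ τ i * ι i) (∑ i, ε₂ τ i * ι i)
      have h6 := abs_add_le ((∑ i, σhat τ i * ι i) + (∑ i, ε₁ τ i * ι i) + (∑ i, ε₂ τ i * ι i))
        (-((∑ i, ε₁ τ i * ι i) + (∑ i, ε₂ τ i * ι i)))
      rw [abs_neg] at h6
      have h7 : (∑ i, σhat τ i * ι i) + (∑ i, ε₁ τ i * ι i) + (∑ i, ε₂ τ i * ι i)
          + -((∑ i, ε₁ τ i * ι i) + (∑ i, ε₂ τ i * ι i)) = ∑ i, σhat τ i * ι i := by ring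
      rw [h7] at h6
      linarith
    linarith
  -- integral lower bound on [s, s+T]
  have hPEs := hPE s hs0 ι hι
  have hintA : αI * T ≤ ∫ τ in s..(s + T), |∑ i, σhat τ i * ι i| := by
    have h1 := mul_le_mul_of_nonneg_right hPEs hT.le
    calc αI * T ≤ 1 / T * (∫ τ in s..(s + T), |∑ i, σhat τ i * ι i|) * T := h1
      _ = ∫ τ in s..(s + T), |∑ i, σhat τ i * ι i| := by field_simp
  -- lower bound the integral of the composite signal on [s, s+T]
  have hI2 : δ * T ≤ ∫ τ in s..(s + T), |∑ i, σ τ i * ι i| := by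
    have hlhs : IntervalIntegrable
        (fun τ => |∑ i, σhat τ i * ι i| - εbar - δ) volume s (s + T) :=
      (hIA.sub (intervalIntegrable_const)).sub (intervalIntegrable_const)
    have hmono := intervalIntegral.integral_mono_on hsb hlhs hIσ2 hpt
    have heq : (∫ τ in s..(s + T), (|∑ i, σhat τ i * ι i| - εbar - δ))
        = (∫ τ in s..(s + T), |∑ i, σhat τ i * ι i|) - T * εbar - T * δ := by
      rw [intervalIntegral.integral_sub (hIA.sub intervalIntegrable_const)
        intervalIntegrable_const,
        intervalIntegral.integral_sub hIA intervalIntegrable_const,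
        intervalIntegral.integral_const, intervalIntegral.integral_const]
      simp [smul_eq_mul]
    rw [heq] at hmono
    have hαδ : αI = εbar + 2 * δ := by rw [hδdef]; ring
    nlinarith
  -- split the integral over [t, t+T']
  have hIσ2' : IntervalIntegrable (fun τ => |∑ i, σ τ i * ι i|) volume s (t + T') := by
    rw [← hsT]; exact hIσ2
  have hsplit : (∫ τ in t..(t + T'), |∑ i, σ τ i * ι i|)
      = (∫ τ in t..s, |∑ i, σ τ i * ι i|) + ∫ τ in s..(t + T'), |∑ i, σ τ i * ι i| :=
    (intervalIntegral.integral_add_adjacent_intervals hIσ1 hIσ2').symm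
  have hfirst : 0 ≤ ∫ τ in t..s, |∑ i, σ τ i * ι i| :=
    intervalIntegral.integral_nonneg hts (fun τ _ => abs_nonneg _)
  have hsecond : δ * T ≤ ∫ τ in s..(t + T'), |∑ i, σ τ i * ι i| := by
    rw [← hsT]; exact hI2
  have htotal : δ * T ≤ ∫ τ in t..(t + T'), |∑ i, σ τ i * ι i| := by
    rw [hsplit]; linarith
  rw [one_div, inv_mul_eq_div, div_le_div_iff₀ hT' hT']
  nlinarith
end

section
/- Let v : ℝ → ℝ^{h̄} be a vector whose r-th component is either sin(ν_r t) or cos(ν_r t), where all ν_r > 0, the frequencies of the sine-type components are pairwise distinct, and the frequencies of the cosine-type components are pairwise distinct (so that the components form a linearly independent orthogonal functional system). Let M ∈ ℝ^{h×h̄} with rank(M) = h, and let ε₁, ε₂ : [0, ∞) → ℝ^h be continuous and bounded with ε₂(t) → 0 as t → ∞. Then there exists ε̄₀ > 0 (depending only on M and v) such that whenever ‖ε₁(t)‖₂ ≤ ε̄ for all t ≥ 0 with ε̄ ≤ ε̄₀, the signal σ(t) = M·(d/dt)v(t) + ε₁(t) + ε₂(t) satisfies the averaged PE condition for some constants α',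 T' > 0. -/
open MeasureTheory

/-!
Write `d/dt v_r = ν_r u_r` with `u_r τ = cos (ν_r τ + φ_r)`, `φ_r = 0` for sines and `π / 2` for
cosines. Then the nominal regressor `σ₀ = M v̇` satisfies `σ₀(τ)ᵀι = ∑_r w_r u_r τ` with
`w = diag(ν) Mᵀ ι`. On every window of length `T` the `u_r` are orthogonal up to a bounded
error, `∫ u_r u_r' = δ_{rr'} T / 2 + O(1)`: different frequencies, or equal frequencies with
phases `π / 2` apart, only produce oscillating terms. Pairing `σ₀ᵀι` with a `u_{r₀}` whose
coefficient is large gives `∫ |σ₀ᵀι| ≥ |w_{r₀}| T / 2 - O(1)`, and since `M` has full row rank,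
compactness of the unit sphere bounds `max_r |w_r|` below uniformly in `ι`; so `σ₀` is PE for
long windows. A perturbation bounded by less than the PE level lowers it but keeps it positive,
and a vanishing transient is absorbed by delaying the window.
-/

open Real Matrix Filter Topology Set

lemma abs_integral_cos_mul_add_le {c : ℝ} (hc : c ≠ 0) (φ a b : ℝ) :
    |∫ τ in a..b, cos (c * τ + φ)| ≤ 2 / |c| := by
  rw [intervalIntegral.integral_comp_mul_add (fun x => cos x) hc, integral_cos, smul_eq_mul,
    abs_mul, abs_inv, div_eq_inv_mul]
  gcongr
  exact (abs_sub _ _).trans (by linarith [abs_sin_le_one (c * b + φ), abs_sin_le_one (c * a + φ)])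

lemma exists_bound_integral_cos_mul_cos_sub {a b : ℝ} (ha : 0 < a) (hb : 0 < b) (φ ψ : ℝ) :
    ∃ K, ∀ s T, |(∫ τ in s..s + T, cos (a * τ + φ) * cos (b * τ + ψ))
      - if a = b then T * cos (φ - ψ) / 2 else 0| ≤ K := by
  have hprod : ∀ τ, cos (a * τ + φ) * cos (b * τ + ψ)
      = cos ((a - b) * τ + (φ - ψ)) / 2 + cos ((a + b) * τ + (φ + ψ)) / 2 := fun τ => by
    rw [show (a - b) * τ + (φ - ψ) = (a * τ + φ) - (b * τ + ψ) by ring,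
      show (a + b) * τ + (φ + ψ) = (a * τ + φ) + (b * τ + ψ) by ring,
      cos_sub (a * τ + φ), cos_add (a * τ + φ)]
    ring
  have hint : ∀ c d s T, IntervalIntegrable (fun τ => cos (c * τ + d) / 2) volume s (s + T) :=
    fun c d s T => by apply Continuous.intervalIntegrable; fun_prop
  have hsum : ∀ s T, ∫ τ in s..s + T, cos (a * τ + φ) * cos (b * τ + ψ)
      = (∫ τ in s..s + T, cos ((a - b) * τ + (φ - ψ))) / 2
        + (∫ τ in s..s + T, cos ((a + b) * τ + (φ + ψ))) / 2 := fun s T => by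
    simp only [hprod, intervalIntegral.integral_add (hint _ _ s T) (hint _ _ s T),
      intervalIntegral.integral_div]
  have hplus := abs_integral_cos_mul_add_le (by positivity : a + b ≠ 0) (φ + ψ)
  split_ifs with hab
  · subst hab
    refine ⟨2 / |a + a| / 2, fun s T => ?_⟩
    simp only [hsum, sub_self, zero_mul, zero_add, intervalIntegral.integral_const, smul_eq_mul,
      add_sub_cancel_left, mul_div_assoc, abs_div, abs_two]
    gcongr
    exact hplus _ _
  · have hminus := abs_integral_cos_mul_add_le (sub_ne_zero.2 hab) (φ - ψ)
    refine ⟨2 / |a - b| / 2 + 2 / |a + b| / 2, fun s T => ?_⟩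
    rw [hsum, sub_zero]
    refine (abs_add_le _ _).trans ?_
    rw [abs_div, abs_div, abs_two]
    gcongr
    exacts [hminus _ _, hplus _ _]

noncomputable def phasedCos {n : ℕ} (S : Finset (Fin n)) (ν : Fin n → ℝ) (r : Fin n) (τ : ℝ) : ℝ :=
  cos (ν r * τ + if r ∈ S then 0 else π / 2)

lemma deriv_sin_or_cos {n : ℕ} (S : Finset (Fin n)) (ν : Fin n → ℝ) (r : Fin n) (τ : ℝ) :
    deriv (fun s => if r ∈ S then sin (ν r * s) else cos (ν r * s)) τ
      = ν r * phasedCos S ν r τ := by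
  by_cases hr : r ∈ S
  · simp [phasedCos, hr, mul_comm]
  · simp [phasedCos, hr, cos_add_pi_div_two, mul_comm]

@[fun_prop]
lemma continuous_phasedCos {n : ℕ} (S : Finset (Fin n)) (ν : Fin n → ℝ) (r : Fin n) :
    Continuous (phasedCos S ν r) := by
  unfold phasedCos; fun_prop

lemma abs_phasedCos_le_one {n : ℕ} (S : Finset (Fin n)) (ν : Fin n → ℝ) (r : Fin n) (τ : ℝ) :
    |phasedCos S ν r τ| ≤ 1 :=
  abs_cos_le_one _

lemma exists_bound_integral_phasedCos_mul_sub {n : ℕ} (S : Finset (Fin n)) (ν : Fin n → ℝ)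
    (hν : ∀ r, 0 < ν r) (hdist : ∀ r r', r ≠ r' → (r ∈ S ↔ r' ∈ S) → ν r ≠ ν r') :
    ∃ K, ∀ r r' s T, |(∫ τ in s..s + T, phasedCos S ν r τ * phasedCos S ν r' τ)
      - if r = r' then T / 2 else 0| ≤ K := by
  have hpair : ∀ r r', ∃ K, ∀ s T, |(∫ τ in s..s + T, phasedCos S ν r τ * phasedCos S ν r' τ)
      - if r = r' then T / 2 else 0| ≤ K := by
    intro r r'
    obtain ⟨K, hK⟩ := exists_bound_integral_cos_mul_cos_sub (hν r) (hν r')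
      (if r ∈ S then 0 else π / 2) (if r' ∈ S then 0 else π / 2)
    have hmain : ∀ T, (if ν r = ν r' then
        T * cos ((if r ∈ S then 0 else π / 2) - if r' ∈ S then 0 else π / 2) / 2 else 0)
        = if r = r' then T / 2 else 0 := by
      intro T
      by_cases hrr : r = r'
      · simp [hrr]
      by_cases hνν : ν r = ν r'
      · -- equal frequencies only occur across the two types, whose phases differ by `π / 2`
        have hS : ¬(r ∈ S ↔ r' ∈ S) := fun h => hdist r r' hrr h hνν
        by_cases hr : r ∈ S <;> simp_all
      · simp [hrr, hνν]
    exact ⟨K, fun s T => hmain T ▸ hK s T⟩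
  choose K hK using hpair
  obtain ⟨B, hB⟩ := (Set.finite_range fun p : Fin n × Fin n => K p.1 p.2).bddAbove
  exact ⟨B, fun r r' s T => (hK r r' s T).trans (hB ⟨(r, r'), rfl⟩)⟩

lemma sub_le_integral_abs_sum_mul {κ : Type*} [Fintype κ] [DecidableEq κ] {u : κ → ℝ → ℝ}
    (hu : ∀ r, Continuous (u r)) (hu1 : ∀ r τ, |u r τ| ≤ 1) {K : ℝ}
    (hK : ∀ r r' s T, |(∫ τ in s..s + T, u r τ * u r' τ) - if r = r' then T / 2 else 0| ≤ K)
    (w : κ → ℝ) (r₀ : κ) (s : ℝ) {T : ℝ} (hT : 0 ≤ T) :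
    |w r₀| * T / 2 - (∑ r, |w r|) * K ≤ ∫ τ in s..s + T, |∑ r, w r * u r τ| := by
  have hsT : s ≤ s + T := by linarith
  have hproj : ∫ τ in s..s + T, (∑ r, w r * u r τ) * u r₀ τ
      = ∑ r, w r * ∫ τ in s..s + T, u r τ * u r₀ τ := by
    simp only [Finset.sum_mul, mul_assoc]
    rw [intervalIntegral.integral_finsetSum fun r _ => by
      apply Continuous.intervalIntegrable; fun_prop]
    simp only [intervalIntegral.integral_const_mul]
  have herr : |(∑ r, w r * ∫ τ in s..s + T, u r τ * u r₀ τ) - w r₀ * (T / 2)|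
      ≤ (∑ r, |w r|) * K := by
    have hsplit : (∑ r, w r * ∫ τ in s..s + T, u r τ * u r₀ τ) - w r₀ * (T / 2)
        = ∑ r, w r * ((∫ τ in s..s + T, u r τ * u r₀ τ) - if r = r₀ then T / 2 else 0) := by
      simp [mul_sub, Finset.sum_sub_distrib]
    rw [hsplit, Finset.sum_mul]
    refine (Finset.abs_sum_le_sum_abs _ _).trans (Finset.sum_le_sum fun r _ => ?_)
    rw [abs_mul]
    exact mul_le_mul_of_nonneg_left (hK r r₀ s T) (abs_nonneg _)
  have hle : |∫ τ in s..s + T, (∑ r, w r * u r τ) * u r₀ τ|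
      ≤ ∫ τ in s..s + T, |∑ r, w r * u r τ| := by
    refine (intervalIntegral.abs_integral_le_integral_abs hsT).trans
      (intervalIntegral.integral_mono_on hsT (by apply Continuous.intervalIntegrable; fun_prop)
        (by apply Continuous.intervalIntegrable; fun_prop) fun τ _ => ?_)
    rw [abs_mul]
    exact mul_le_of_le_one_right (abs_nonneg _) (hu1 r₀ τ)
  have hmain : |w r₀ * (T / 2)| = |w r₀| * T / 2 := by
    rw [abs_mul, abs_of_nonneg (by linarith : 0 ≤ T / 2)]; ring
  rw [hproj] at hle
  linarith [abs_sub_abs_le_abs_sub (w r₀ * (T / 2)) (∑ r, w r * ∫ τ in s..s + T, u r τ * u r₀ τ),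
    abs_sub_comm (w r₀ * (T / 2)) (∑ r, w r * ∫ τ in s..s + T, u r τ * u r₀ τ)]

lemma isCompact_setOf_sum_sq_eq_one (m : Type*) [Fintype m] :
    IsCompact {x : m → ℝ | ∑ i, x i ^ 2 = 1} := by
  refine Metric.isCompact_of_isClosed_isBounded (isClosed_eq (by fun_prop) continuous_const)
    ((Metric.isBounded_closedBall (x := 0) (r := 1)).subset fun x hx => ?_)
  rw [mem_closedBall_zero_iff, pi_norm_le_iff_of_nonneg zero_le_one]
  intro i
  have hi : x i ^ 2 ≤ 1 :=
    hx ▸ Finset.single_le_sum (fun j _ => sq_nonneg (x j)) (Finset.mem_univ i)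
  simpa using Real.abs_le_sqrt hi

lemma IsCompact.exists_pos_le_abs_apply {X κ : Type*} [TopologicalSpace X] [Fintype κ]
    {s : Set X} (hs : IsCompact s) {A : X → κ → ℝ} (hA : ContinuousOn A s)
    (hA0 : ∀ x ∈ s, A x ≠ 0) : ∃ c > 0, ∀ x ∈ s, ∃ r, c ≤ |A x r| := by
  obtain ⟨c, hc, hcA⟩ := hs.exists_forall_le' hA.norm fun x hx => norm_pos_iff.2 (hA0 x hx)
  refine ⟨c, hc, fun x hx => ?_⟩
  by_contra! hlt
  exact (hcA x hx).not_gt ((pi_norm_lt_iff hc).2 fun r => by simpa using hlt r)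

lemma exists_pos_mul_le_integral_abs_sum {m κ : Type*} [Fintype m] [Fintype κ] [DecidableEq κ]
    {u : κ → ℝ → ℝ} (hu : ∀ r, Continuous (u r)) (hu1 : ∀ r τ, |u r τ| ≤ 1) {K : ℝ}
    (hK : ∀ r r' s T, |(∫ τ in s..s + T, u r τ * u r' τ) - if r = r' then T / 2 else 0| ≤ K)
    {A : (m → ℝ) → κ → ℝ} (hA : Continuous A) (hA0 : ∀ x, ∑ i, x i ^ 2 = 1 → A x ≠ 0) :
    ∃ α > 0, ∃ T > 0, ∀ s x, ∑ i, x i ^ 2 = 1 →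
      α * T ≤ ∫ τ in s..s + T, |∑ r, A x r * u r τ| := by
  have hcpt := isCompact_setOf_sum_sq_eq_one m
  obtain ⟨c, hc, hcA⟩ := hcpt.exists_pos_le_abs_apply hA.continuousOn hA0
  obtain ⟨W, hW⟩ := hcpt.exists_bound_of_continuousOn
    (f := fun x => ∑ r, |A x r|) (by fun_prop)
  set B := |W| * |K|
  -- `T` is chosen so that the diagonal term `c T / 2` exceeds the cross terms `B` by `c T / 4`
  refine ⟨c / 4, by positivity, 4 * (B + 1) / c, by positivity, fun s x hx => ?_⟩
  obtain ⟨r₀, hr₀⟩ := hcA x hx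
  have hlow := sub_le_integral_abs_sum_mul hu hu1 hK (A x) r₀ s (T := 4 * (B + 1) / c)
    (by positivity)
  have hcross : (∑ r, |A x r|) * K ≤ B := calc
    (∑ r, |A x r|) * K ≤ |(∑ r, |A x r|) * K| := le_abs_self _
    _ = ‖∑ r, |A x r|‖ * |K| := by rw [abs_mul, Real.norm_eq_abs]
    _ ≤ B := mul_le_mul_of_nonneg_right ((hW x hx).trans (le_abs_self W)) (abs_nonneg K)
  have hdiag : c * (4 * (B + 1) / c) / 2 ≤ |A x r₀| * (4 * (B + 1) / c) / 2 := by gcongr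
  have hcT : c * (4 * (B + 1) / c) = 4 * (B + 1) := by field_simp
  have hαT : c / 4 * (4 * (B + 1) / c) = B + 1 := by field_simp
  rw [hcT] at hdiag
  linarith

lemma Matrix.mulVec_injective_of_rank_eq_card {m n K : Type*} [Fintype m] [Fintype n] [Field K]
    {A : Matrix m n K} (hA : A.rank = Fintype.card n) : Function.Injective A.mulVec := by
  have hsum := LinearMap.finrank_range_add_finrank_ker A.mulVecLin
  rw [Module.finrank_fintype_fun_eq_card, ← Matrix.rank, hA, add_eq_left,
    Submodule.finrank_eq_zero, LinearMap.ker_eq_bot] at hsum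
  exact hsum

lemma sum_mulVec_mul {m n : Type*} [Fintype m] [Fintype n] (M : Matrix m n ℝ) (v : n → ℝ)
    (x : m → ℝ) : ∑ i, (M *ᵥ v) i * x i = ∑ r, (Mᵀ *ᵥ x) r * v r := by
  change (M *ᵥ v) ⬝ᵥ x = (Mᵀ *ᵥ x) ⬝ᵥ v
  rw [dotProduct_comm, Matrix.dotProduct_mulVec, Matrix.mulVec_transpose]

lemma avgPE_mulVec_phasedCos {h n : ℕ} (S : Finset (Fin n)) (ν : Fin n → ℝ)
    (hν : ∀ r, 0 < ν r) (hdist : ∀ r r', r ≠ r' → (r ∈ S ↔ r' ∈ S) → ν r ≠ ν r')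
    {M : Matrix (Fin h) (Fin n) ℝ} (hM : M.rank = h) :
    ∃ α > 0, ∃ T > 0, AvgPE (fun t => M *ᵥ fun r => ν r * phasedCos S ν r t) α T := by
  obtain ⟨K, hK⟩ := exists_bound_integral_phasedCos_mul_sub S ν hν hdist
  have hinj : Function.Injective Mᵀ.mulVec :=
    mulVec_injective_of_rank_eq_card (by rw [rank_transpose, hM, Fintype.card_fin])
  have hA0 : ∀ x : Fin h → ℝ, ∑ i, x i ^ 2 = 1 → (fun r => ν r * (Mᵀ *ᵥ x) r) ≠ 0 := by
    intro x hx hzero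
    have hx0 : x = 0 := hinj <| by
      ext r
      simpa [(hν r).ne'] using congrFun hzero r
    simp [hx0] at hx
  obtain ⟨α, hα, T, hT, hαT⟩ := exists_pos_mul_le_integral_abs_sum (continuous_phasedCos S ν)
    (abs_phasedCos_le_one S ν) hK (by fun_prop) hA0
  refine ⟨α, hα, T, hT, fun t _ x hx => ?_⟩
  rw [one_div_mul_eq_div, le_div_iff₀ hT]
  refine (hαT t x hx).trans_eq (intervalIntegral.integral_congr fun τ _ => ?_)
  dsimp only
  rw [sum_mulVec_mul]
  exact congrArg abs (Finset.sum_congr rfl fun r _ => by ring)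

lemma abs_sum_mul_le_sqrt_sum_sq {m : Type*} [Fintype m] (x y : m → ℝ)
    (hy : ∑ i, y i ^ 2 = 1) : |∑ i, x i * y i| ≤ √(∑ i, x i ^ 2) :=
  Real.abs_le_sqrt (by simpa [hy] using Finset.sum_mul_sq_le_sq_mul_sq Finset.univ x y)

lemma integral_abs_sub_mul_le_integral_abs_add {f e : ℝ → ℝ} {a b β : ℝ} (hab : a ≤ b)
    (hf : ContinuousOn f (Icc a b)) (he : ContinuousOn e (Icc a b))
    (heβ : ∀ τ ∈ Icc a b, |e τ| ≤ β) :
    (∫ τ in a..b, |f τ|) - β * (b - a) ≤ ∫ τ in a..b, |f τ + e τ| := by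
  have hfi := hf.abs.intervalIntegrable_of_Icc (μ := volume) hab
  calc (∫ τ in a..b, |f τ|) - β * (b - a) = ∫ τ in a..b, (|f τ| - β) := by
        rw [intervalIntegral.integral_sub hfi intervalIntegrable_const,
          intervalIntegral.integral_const, smul_eq_mul, mul_comm]
    _ ≤ ∫ τ in a..b, |f τ + e τ| :=
        intervalIntegral.integral_mono_on hab (hfi.sub intervalIntegrable_const)
          ((hf.add he).abs.intervalIntegrable_of_Icc hab) fun τ hτ => by
            have htri := abs_sub_abs_le_abs_sub (f τ) (-e τ)
            rw [sub_neg_eq_add, abs_neg] at htri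
            linarith [heβ τ hτ]

theorem AvgPE.exists_add_of_tendsto {h : ℕ} {σ ε₁ ε₂ : ℝ → Fin h → ℝ} {α T εbar : ℝ}
    (hσ : AvgPE σ α T) (hT : 0 < T) (hσc : ContinuousOn σ (Ici 0)) (hε₁c : ContinuousOn ε₁ (Ici 0))
    (hε₂c : ContinuousOn ε₂ (Ici 0)) (hε₁ : ∀ t ≥ (0 : ℝ), √(∑ i, ε₁ t i ^ 2) ≤ εbar)
    (hεbar : εbar < α) (hε₂ : Tendsto (fun t => √(∑ i, ε₂ t i ^ 2)) atTop (𝓝 0)) :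
    ∃ α' T', 0 < α' ∧ 0 < T' ∧ AvgPE (fun t i => σ t i + ε₁ t i + ε₂ t i) α' T' := by
  set δ := (α - εbar) / 2 with hδ
  obtain ⟨t₁, ht₁⟩ := eventually_atTop.1 (hε₂.eventually (eventually_le_nhds
    (by linarith : 0 < δ)))
  set t₀ := max t₁ 0
  refine ⟨δ * T / (t₀ + T), t₀ + T, by positivity, by positivity, fun t ht x hx => ?_⟩
  have ht₀ : 0 ≤ t₀ := le_max_right _ _
  set s := t + t₀
  have hs : 0 ≤ s := by positivity
  have hε : ∀ τ ≥ s, |∑ i, (ε₁ τ i + ε₂ τ i) * x i| ≤ εbar + δ := fun τ hτ => by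
    simp only [add_mul, Finset.sum_add_distrib]
    refine (abs_add_le _ _).trans (add_le_add ?_ ?_)
    · exact (abs_sum_mul_le_sqrt_sum_sq _ x hx).trans (hε₁ τ (hs.trans hτ))
    · exact (abs_sum_mul_le_sqrt_sum_sq _ x hx).trans
        (ht₁ τ ((le_max_left _ _).trans (by linarith)))
  have hwin : δ * T ≤ ∫ τ in s..s + T, |∑ i, (σ τ i + ε₁ τ i + ε₂ τ i) * x i| := by
    have hnom := hσ s hs x hx
    rw [one_div, inv_mul_eq_div, le_div_iff₀ hT] at hnom
    have hIcc : Icc s (s + T) ⊆ Ici 0 := (Icc_subset_Ici_iff (by linarith)).2 hs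
    have hpert := integral_abs_sub_mul_le_integral_abs_add (le_add_of_nonneg_right hT.le)
      ((by fun_prop : ContinuousOn (fun τ => ∑ i, σ τ i * x i) (Ici 0)).mono hIcc)
      ((by fun_prop : ContinuousOn (fun τ => ∑ i, (ε₁ τ i + ε₂ τ i) * x i) (Ici 0)).mono hIcc)
      fun τ hτ => hε τ hτ.1
    simp only [add_mul, Finset.sum_add_distrib] at hpert ⊢
    simp only [← add_assoc, add_sub_cancel_left] at hpert
    have hgap : α * T - (εbar * T + δ * T) = δ * T := by rw [hδ]; ring
    linarith
  have hg : ContinuousOn (fun τ => |∑ i, (σ τ i + ε₁ τ i + ε₂ τ i) * x i|) (Ici 0) := by fun_prop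
  have hmono := intervalIntegral.integral_mono_interval (by linarith : t ≤ s)
    (by linarith : s ≤ s + T) (by linarith : s + T ≤ t + (t₀ + T))
    (Eventually.of_forall fun τ => abs_nonneg _)
    ((hg.mono ((Icc_subset_Ici_iff (by linarith)).2 ht)).intervalIntegrable_of_Icc
      (μ := volume) (by linarith))
  rw [one_div_mul_eq_div]
  exact div_le_div_of_nonneg_right (hwin.trans hmono) (by positivity)

theorem stmt_9_general (h hbar : ℕ)
    (S : Finset (Fin hbar)) (ν : Fin hbar → ℝ) (hνpos : ∀ r, 0 < ν r)
    (hdist : ∀ r r' : Fin hbar, r ≠ r' → ((r ∈ S) ↔ (r' ∈ S)) → ν r ≠ ν r')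
    (M : Matrix (Fin h) (Fin hbar) ℝ) (hM : M.rank = h) :
    ∃ εbar₀ : ℝ, 0 < εbar₀ ∧
      ∀ ε₁ ε₂ : ℝ → Fin h → ℝ,
        ContinuousOn ε₁ (Set.Ici 0) → ContinuousOn ε₂ (Set.Ici 0) →
        (∃ C : ℝ, ∀ t ≥ (0 : ℝ), ∀ i, |ε₁ t i| ≤ C) →
        (∃ C : ℝ, ∀ t ≥ (0 : ℝ), ∀ i, |ε₂ t i| ≤ C) →
        Filter.Tendsto (fun t => Real.sqrt (∑ i, ε₂ t i ^ 2)) Filter.atTop (nhds 0) →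
        ∀ εbar : ℝ, εbar ≤ εbar₀ →
          (∀ t ≥ (0 : ℝ), Real.sqrt (∑ i, ε₁ t i ^ 2) ≤ εbar) →
          ∃ α' T' : ℝ, 0 < α' ∧ 0 < T' ∧
            AvgPE (fun t i =>
              M.mulVec (fun r =>
                deriv (fun s => if r ∈ S then Real.sin (ν r * s) else Real.cos (ν r * s)) t) i
              + ε₁ t i + ε₂ t i) α' T' := by
  obtain ⟨α, hα, T, hT, hPE⟩ := avgPE_mulVec_phasedCos S ν hνpos hdist hM
  refine ⟨α / 2, by positivity, fun ε₁ ε₂ hε₁c hε₂c _ _ hε₂ εbar hεbar hε₁ => ?_⟩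
  simp only [deriv_sin_or_cos]
  exact hPE.exists_add_of_tendsto hT (by fun_prop) hε₁c hε₂c hε₁ (by linarith) hε₂

/-- Lemma 8 of the paper, made concrete: let `v : ℝ → ℝ^h̄` have
components `sin(ν_r t)` (for `r ∈ S`) or `cos(ν_r t)` (for `r ∉ S`) with positive
frequencies, pairwise distinct within each type, and let `M` have full row rank.
Then there is a margin `ε̄₀ > 0`, depending only on `M` and `v`, such that
`σ = M·(d/dt)v + ε₁ + ε₂` satisfies the averaged PE condition whenever
`‖ε₁(t)‖₂ ≤ ε̄ ≤ ε̄₀` and `ε₂` is a vanishing bounded transient. -/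
theorem stmt_9 (h hbar : ℕ) (hh : 1 ≤ h)
    (S : Finset (Fin hbar)) (ν : Fin hbar → ℝ) (hνpos : ∀ r, 0 < ν r)
    (hdist : ∀ r r' : Fin hbar, r ≠ r' → ((r ∈ S) ↔ (r' ∈ S)) → ν r ≠ ν r')
    (M : Matrix (Fin h) (Fin hbar) ℝ) (hM : M.rank = h) :
    ∃ εbar₀ : ℝ, 0 < εbar₀ ∧
      ∀ ε₁ ε₂ : ℝ → Fin h → ℝ,
        ContinuousOn ε₁ (Set.Ici 0) → ContinuousOn ε₂ (Set.Ici 0) →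
        (∃ C : ℝ, ∀ t ≥ (0 : ℝ), ∀ i, |ε₁ t i| ≤ C) →
        (∃ C : ℝ, ∀ t ≥ (0 : ℝ), ∀ i, |ε₂ t i| ≤ C) →
        Filter.Tendsto (fun t => Real.sqrt (∑ i, ε₂ t i ^ 2)) Filter.atTop (nhds 0) →
        ∀ εbar : ℝ, εbar ≤ εbar₀ →
          (∀ t ≥ (0 : ℝ), Real.sqrt (∑ i, ε₁ t i ^ 2) ≤ εbar) →
          ∃ α' T' : ℝ, 0 < α' ∧ 0 < T' ∧
            AvgPE (fun t i =>
              M.mulVec (fun r =>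
                deriv (fun s => if r ∈ S then Real.sin (ν r * s) else Real.cos (ν r * s)) t) i
              + ε₁ t i + ε₂ t i) α' T' :=
  stmt_9_general h hbar S ν hνpos hdist M hM
end

section
/- Let h ≥ 1, let S ⊆ {1,…,h}, let a_1,…,a_h be nonzero reals and μ_1,…,μ_h ∈ ℝ. Define σ : ℝ → ℝ^h componentwise by σ_j(t) = a_j·μ_j·cos(μ_j t) for j ∈ S and σ_j(t) = a_j·μ_j·sin(μ_j t) for j ∉ S (so each component is the derivative of a single sinusoid). Then σ is persistently exciting on [0, ∞) if and only if μ_j ≠ 0 for all j ∈ {1,…,h} and μ_i ≠ μ_j as well as μ_i ≠ −μ_j for all i ≠ j with either both i, j ∈ S or both i, j ∉ S. -/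
/-!
Write each component as `b_j cos (μ_j t - φ_j)` with `b_j = a_j μ_j` and phase `φ_j ∈ {0, π/2}`.
By product-to-sum, every entry of `∫_t^{t+T} σ σᵀ` is a combination of integrals of
`cos (ω τ - θ)` with `ω = μ_i ∓ μ_j`, and such an integral is bounded uniformly in `t` and `T`
unless `ω = 0` and `cos θ ≠ 0`. Under the frequency conditions that exceptional case occurs only
on the diagonal, where it contributes `b_i² T / 2`; so the matrix is `T · diag (b_i² / 2)` up to a
bounded error, and dominates the identity once `T` is large. Conversely, if `μ_j = 0`, or
`μ_i = ±μ_j` within one family, some nonzero combination of the components vanishes identically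
and lies in the kernel of every such matrix.
-/

open MeasureTheory

open Matrix

namespace Matrix

variable {n : Type*} [Fintype n]

theorem neg_mul_sum_sq_le_dotProduct_mulVec {E : Matrix n n ℝ} {C : ℝ} (hE : ∀ i j, |E i j| ≤ C)
    (x : n → ℝ) : -(C * Fintype.card n * ∑ i, x i ^ 2) ≤ x ⬝ᵥ E *ᵥ x := by
  have hterm : ∀ i j, -(C * (x i ^ 2 + x j ^ 2) / 2) ≤ x i * (E i j * x j) := by
    intro i j
    have hxy : 2 * |x i| * |x j| ≤ x i ^ 2 + x j ^ 2 := by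
      nlinarith [sq_nonneg (|x i| - |x j|), sq_abs (x i), sq_abs (x j)]
    have habs : |x i * (E i j * x j)| ≤ C * (x i ^ 2 + x j ^ 2) / 2 := by
      rw [abs_mul, abs_mul]
      nlinarith [hE i j, abs_nonneg (E i j), abs_nonneg (x i), abs_nonneg (x j)]
    exact (abs_le.mp habs).1
  calc -(C * Fintype.card n * ∑ i, x i ^ 2)
      = ∑ i, ∑ j, -(C * (x i ^ 2 + x j ^ 2) / 2) := by
        simp only [Finset.sum_neg_distrib, ← Finset.sum_div, ← Finset.mul_sum,
          Finset.sum_add_distrib, Finset.sum_const, Finset.card_univ, nsmul_eq_mul]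
        ring
    _ ≤ ∑ i, ∑ j, x i * (E i j * x j) := by gcongr with i _ j _; exact hterm i j
    _ = x ⬝ᵥ E *ᵥ x := by simp only [dotProduct, mulVec, Finset.mul_sum]

variable [DecidableEq n]

theorem posSemidef_of_abs_sub_diagonal_le {A : Matrix n n ℝ} (hA : A.IsHermitian) {d : n → ℝ}
    {C : ℝ} (hC : ∀ i j, |(A - diagonal d) i j| ≤ C) (hd : ∀ i, C * Fintype.card n ≤ d i) :
    A.PosSemidef := by
  refine .of_dotProduct_mulVec_nonneg hA fun x => ?_
  have hdiag : x ⬝ᵥ diagonal d *ᵥ x = ∑ i, d i * x i ^ 2 := by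
    simp only [dotProduct, mulVec_diagonal]; congr 1; ext i; ring
  have hsplit : x ⬝ᵥ A *ᵥ x = x ⬝ᵥ diagonal d *ᵥ x + x ⬝ᵥ (A - diagonal d) *ᵥ x := by
    rw [sub_mulVec, dotProduct_sub]; ring
  have hdom : C * Fintype.card n * ∑ i, x i ^ 2 ≤ ∑ i, d i * x i ^ 2 := by
    rw [Finset.mul_sum]; gcongr with i; exact hd i
  rw [star_trivial, hsplit, hdiag]
  linarith [neg_mul_sum_sq_le_dotProduct_mulVec hC x]

end Matrix

section PersistentExcitation

variable {h : ℕ}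

theorem isHermitian_peMatrix (σ : ℝ → Fin h → ℝ) (t T : ℝ) : (peMatrix σ t T).IsHermitian := by
  ext i j
  simp only [conjTranspose_apply, star_trivial, peMatrix, of_apply, mul_comm]

theorem peMatrix_mulVec_eq_zero {σ : ℝ → Fin h → ℝ} (hσ : Continuous σ) {x : Fin h → ℝ}
    (hx : ∀ τ, σ τ ⬝ᵥ x = 0) (t T : ℝ) : peMatrix σ t T *ᵥ x = 0 := by
  ext i
  have hint : ∀ j, IntervalIntegrable (fun τ => σ τ i * σ τ j * x j) volume t (t + T) :=
    fun j => (by fun_prop : Continuous fun τ => σ τ i * σ τ j * x j).intervalIntegrable _ _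
  calc (peMatrix σ t T *ᵥ x) i = ∫ τ in t..(t + T), ∑ j, σ τ i * σ τ j * x j := by
        simp only [mulVec, dotProduct, peMatrix, of_apply, ← intervalIntegral.integral_mul_const]
        exact (intervalIntegral.integral_finsetSum fun j _ => hint j).symm
    _ = ∫ τ in t..(t + T), σ τ i * (σ τ ⬝ᵥ x) := by
        simp only [dotProduct, Finset.mul_sum, mul_assoc]
    _ = 0 := by simp [hx]

theorem not_isPE_of_dotProduct_eq_zero {σ : ℝ → Fin h → ℝ} (hσ : Continuous σ) {x : Fin h → ℝ}
    (hx₀ : x ≠ 0) (hx : ∀ τ, σ τ ⬝ᵥ x = 0) (t₀ : ℝ) : ¬IsPE σ t₀ := by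
  rintro ⟨α, T, hα, -, hPE⟩
  have hnonneg := (hPE t₀ le_rfl).dotProduct_mulVec_nonneg x
  rw [sub_mulVec, peMatrix_mulVec_eq_zero hσ hx, smul_mulVec, one_mulVec, zero_sub,
    dotProduct_neg, dotProduct_smul, smul_eq_mul, star_trivial] at hnonneg
  have hpos : 0 < x ⬝ᵥ x := by simpa using dotProduct_self_star_pos_iff.mpr hx₀
  nlinarith

theorem not_isPE_of_component_eq_zero {σ : ℝ → Fin h → ℝ} (hσ : Continuous σ) {j : Fin h}
    (hj : ∀ τ, σ τ j = 0) (t₀ : ℝ) : ¬IsPE σ t₀ :=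
  not_isPE_of_dotProduct_eq_zero hσ (Pi.single_ne_zero_iff.mpr one_ne_zero)
    (fun τ => by rw [dotProduct_single, hj, zero_mul]) t₀

theorem not_isPE_of_component_eq_mul {σ : ℝ → Fin h → ℝ} (hσ : Continuous σ) {i j : Fin h}
    (hij : i ≠ j) {c : ℝ} (hc : ∀ τ, σ τ i = c * σ τ j) (t₀ : ℝ) : ¬IsPE σ t₀ := by
  refine not_isPE_of_dotProduct_eq_zero hσ (x := Pi.single i 1 - Pi.single j c) ?_ ?_ t₀
  · intro h0
    simpa [hij] using congrFun h0 i
  · intro τ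
    rw [dotProduct_sub, dotProduct_single, dotProduct_single, hc]
    ring

theorem isPE_of_bounded_sub_diagonal {σ : ℝ → Fin h → ℝ} {D : Fin h → ℝ} (hD : ∀ i, 0 < D i)
    (hbdd : ∀ i j, ∃ C, ∀ t T, |(peMatrix σ t T - diagonal (T • D)) i j| ≤ C) (t₀ : ℝ) :
    IsPE σ t₀ := by
  choose C hC using hbdd
  obtain ⟨C₀, hC₀⟩ := Finite.exists_le fun p : Fin h × Fin h => C p.1 p.2
  obtain ⟨T₀, hT₀⟩ := Finite.exists_le fun i => (1 + C₀ * h) / D i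
  refine ⟨1, max T₀ 1, one_pos, by positivity, fun t _ => ?_⟩
  set T := max T₀ 1
  have hsub : peMatrix σ t T - (1 : ℝ) • 1 - diagonal (T • D - 1) =
      peMatrix σ t T - diagonal (T • D) := by
    rw [one_smul, ← diagonal_one, sub_sub, diagonal_add]
    simp only [Pi.sub_apply, Pi.one_apply, add_sub_cancel]
  refine posSemidef_of_abs_sub_diagonal_le
    ((isHermitian_peMatrix σ t T).sub ((isHermitian_one).smul (IsSelfAdjoint.one ℝ)))
    (d := T • D - 1) (C := C₀) (fun i j => ?_) (fun i => ?_)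
  · rw [hsub]; exact (hC i j t T).trans (hC₀ (i, j))
  · have hT : (1 + C₀ * h) / D i ≤ T := (hT₀ i).trans (le_max_left _ _)
    rw [div_le_iff₀ (hD i)] at hT
    simp only [Fintype.card_fin, Pi.sub_apply, Pi.smul_apply, smul_eq_mul, Pi.one_apply]
    linarith

end PersistentExcitation

open Real

theorem exists_abs_integral_cos_mul_sub_le {ω θ : ℝ} (h : ω ≠ 0 ∨ cos θ = 0) :
    ∃ C, ∀ A B, |∫ τ in A..B, cos (ω * τ - θ)| ≤ C := by
  rcases eq_or_ne ω 0 with rfl | hω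
  · refine ⟨0, fun A B => ?_⟩
    simp [cos_neg, h.resolve_left (not_not.mpr rfl)]
  · refine ⟨2 / |ω|, fun A B => ?_⟩
    rw [intervalIntegral.integral_comp_mul_sub (fun x => cos x) hω, integral_cos, smul_eq_mul,
      abs_mul, abs_inv, ← div_eq_inv_mul]
    gcongr
    exact (abs_sub _ _).trans
      (by linarith [abs_sin_le_one (ω * B - θ), abs_sin_le_one (ω * A - θ)])

section Sinusoid

variable {h : ℕ} (S : Finset (Fin h)) (a μ : Fin h → ℝ)

noncomputable def sinusoidRegressor (t : ℝ) (j : Fin h) : ℝ :=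
  if j ∈ S then a j * μ j * cos (μ j * t) else a j * μ j * sin (μ j * t)

theorem continuous_sinusoidRegressor : Continuous (sinusoidRegressor S a μ) :=
  continuous_pi fun j => by unfold sinusoidRegressor; split_ifs <;> fun_prop

noncomputable def sinusoidPhase (j : Fin h) : ℝ := if j ∈ S then 0 else π / 2

theorem sinusoidRegressor_eq_cos (t : ℝ) (j : Fin h) :
    sinusoidRegressor S a μ t j = a j * μ j * cos (μ j * t - sinusoidPhase S j) := by
  unfold sinusoidRegressor sinusoidPhase
  split_ifs <;> simp [cos_sub_pi_div_two]

theorem cos_sinusoidPhase_eq_zero_of_not_iff {i j : Fin h} (hS : ¬(i ∈ S ↔ j ∈ S)) :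
    cos (sinusoidPhase S i - sinusoidPhase S j) = 0 ∧
      cos (sinusoidPhase S i + sinusoidPhase S j) = 0 := by
  unfold sinusoidPhase
  by_cases hi : i ∈ S <;> by_cases hj : j ∈ S <;> simp_all

theorem peMatrix_sinusoidRegressor_apply (t T : ℝ) (i j : Fin h) :
    peMatrix (sinusoidRegressor S a μ) t T i j = a i * μ i * (a j * μ j) / 2 *
      ((∫ τ in t..(t + T), cos ((μ i - μ j) * τ - (sinusoidPhase S i - sinusoidPhase S j))) +
        ∫ τ in t..(t + T), cos ((μ i + μ j) * τ - (sinusoidPhase S i + sinusoidPhase S j))) := by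
  have hint : ∀ ω θ : ℝ, IntervalIntegrable (fun τ => cos (ω * τ - θ)) volume t (t + T) :=
    fun ω θ => (by fun_prop : Continuous fun τ => cos (ω * τ - θ)).intervalIntegrable _ _
  rw [← intervalIntegral.integral_add (hint _ _) (hint _ _),
    ← intervalIntegral.integral_const_mul]
  refine intervalIntegral.integral_congr fun τ _ => ?_
  simp only [sinusoidRegressor_eq_cos]
  rw [show (μ i - μ j) * τ - (sinusoidPhase S i - sinusoidPhase S j)
      = (μ i * τ - sinusoidPhase S i) - (μ j * τ - sinusoidPhase S j) by ring,
    show (μ i + μ j) * τ - (sinusoidPhase S i + sinusoidPhase S j)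
      = (μ i * τ - sinusoidPhase S i) + (μ j * τ - sinusoidPhase S j) by ring,
    cos_sub (μ i * τ - sinusoidPhase S i), cos_add (μ i * τ - sinusoidPhase S i)]
  ring

theorem exists_abs_peMatrix_sinusoidRegressor_sub_diagonal_le (hμ : ∀ j, μ j ≠ 0)
    (hpair : ∀ i j, i ≠ j → (i ∈ S ↔ j ∈ S) → μ i ≠ μ j ∧ μ i ≠ -μ j) (i j : Fin h) :
    ∃ C, ∀ t T, |(peMatrix (sinusoidRegressor S a μ) t T -
      diagonal (T • fun k => (a k * μ k) ^ 2 / 2) : Matrix (Fin h) (Fin h) ℝ) i j| ≤ C := by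
  rcases eq_or_ne i j with rfl | hij
  · obtain ⟨C, hC⟩ := exists_abs_integral_cos_mul_sub_le
      (ω := μ i + μ i) (θ := sinusoidPhase S i + sinusoidPhase S i) (.inl (by simpa using hμ i))
    refine ⟨|(a i * μ i) ^ 2 / 2| * C, fun t T => ?_⟩
    rw [Matrix.sub_apply, diagonal_apply_eq, peMatrix_sinusoidRegressor_apply, sub_self, sub_self]
    simp only [zero_mul, sub_zero, cos_zero, intervalIntegral.integral_const, add_sub_cancel_left,
      smul_eq_mul, mul_one, Pi.smul_apply]
    rw [show ∀ I : ℝ, a i * μ i * (a i * μ i) / 2 * (T + I) - T * ((a i * μ i) ^ 2 / 2) =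
      (a i * μ i) ^ 2 / 2 * I from fun I => by ring, abs_mul]
    gcongr
    exact hC _ _
  · have hfreq : (μ i - μ j ≠ 0 ∨ cos (sinusoidPhase S i - sinusoidPhase S j) = 0) ∧
        (μ i + μ j ≠ 0 ∨ cos (sinusoidPhase S i + sinusoidPhase S j) = 0) := by
      by_cases hS : i ∈ S ↔ j ∈ S
      · obtain ⟨hne, hne'⟩ := hpair i j hij hS
        exact ⟨.inl (sub_ne_zero.mpr hne), .inl fun h0 => hne' (eq_neg_of_add_eq_zero_left h0)⟩
      · obtain ⟨hsub, hadd⟩ := cos_sinusoidPhase_eq_zero_of_not_iff S hS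
        exact ⟨.inr hsub, .inr hadd⟩
    obtain ⟨C₁, hC₁⟩ := exists_abs_integral_cos_mul_sub_le hfreq.1
    obtain ⟨C₂, hC₂⟩ := exists_abs_integral_cos_mul_sub_le hfreq.2
    refine ⟨|a i * μ i * (a j * μ j) / 2| * (C₁ + C₂), fun t T => ?_⟩
    rw [Matrix.sub_apply, diagonal_apply_ne _ hij, sub_zero, peMatrix_sinusoidRegressor_apply,
      abs_mul]
    gcongr
    exact (abs_add_le _ _).trans (add_le_add (hC₁ _ _) (hC₂ _ _))

theorem exists_sinusoidRegressor_eq_mul {i j : Fin h} (hj : a j * μ j ≠ 0) (hS : i ∈ S ↔ j ∈ S)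
    (hμ : μ i = μ j ∨ μ i = -μ j) :
    ∃ c, ∀ τ, sinusoidRegressor S a μ τ i = c * sinusoidRegressor S a μ τ j := by
  by_cases hjS : j ∈ S
  · refine ⟨a i * μ i / (a j * μ j), fun τ => ?_⟩
    have hcos : cos (μ i * τ) = cos (μ j * τ) := by
      rcases hμ with hμ | hμ <;> simp [hμ, cos_neg]
    simp only [sinusoidRegressor, hjS, hS.mpr hjS, if_true]
    rw [hcos, ← mul_assoc, div_mul_cancel₀ _ hj]
  · have hiS : i ∉ S := mt hS.mp hjS
    rcases hμ with hμ | hμ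
    · refine ⟨a i * μ i / (a j * μ j), fun τ => ?_⟩
      have hsin : sin (μ i * τ) = sin (μ j * τ) := by rw [hμ]
      simp only [sinusoidRegressor, hjS, hiS, if_false]
      rw [hsin, ← mul_assoc, div_mul_cancel₀ _ hj]
    · refine ⟨-(a i * μ i / (a j * μ j)), fun τ => ?_⟩
      have hsin : sin (μ i * τ) = -sin (μ j * τ) := by rw [hμ, neg_mul, sin_neg]
      simp only [sinusoidRegressor, hjS, hiS, if_false]
      rw [hsin, neg_mul, ← mul_assoc, div_mul_cancel₀ _ hj, mul_neg]

end Sinusoid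

theorem stmt_13_general (h : ℕ) (S : Finset (Fin h))
    (a μ : Fin h → ℝ) (ha : ∀ j, a j ≠ 0) :
    IsPE (fun t j =>
        if j ∈ S then a j * μ j * Real.cos (μ j * t) else a j * μ j * Real.sin (μ j * t)) 0
      ↔ ((∀ j, μ j ≠ 0) ∧
          ∀ i j : Fin h, i ≠ j → ((i ∈ S) ↔ (j ∈ S)) → μ i ≠ μ j ∧ μ i ≠ -μ j) := by
  change IsPE (sinusoidRegressor S a μ) 0 ↔ _
  have hσ := continuous_sinusoidRegressor S a μ
  constructor
  · intro hPE
    have hμ : ∀ j, μ j ≠ 0 := fun j hj =>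
      not_isPE_of_component_eq_zero hσ (j := j) (fun τ => by simp [sinusoidRegressor, hj]) 0 hPE
    refine ⟨hμ, fun i j hij hS => not_or.mp fun hμij => ?_⟩
    obtain ⟨c, hc⟩ := exists_sinusoidRegressor_eq_mul S a μ (mul_ne_zero (ha j) (hμ j)) hS hμij
    exact not_isPE_of_component_eq_mul hσ hij hc 0 hPE
  · rintro ⟨hμ, hpair⟩
    exact isPE_of_bounded_sub_diagonal (fun i => by have := ha i; have := hμ i; positivity)
      (exists_abs_peMatrix_sinusoidRegressor_sub_diagonal_le S a μ hμ hpair) 0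

/-- Lemma 6 of the paper, case N_P = 1: when every regressor component
is a single sinusoid derivative (`σ_j(t) = a_j μ_j cos(μ_j t)` for `j ∈ S`, else
`a_j μ_j sin(μ_j t)`), persistent excitation holds iff all frequencies are nonzero and
within each trigonometric family frequencies are pairwise distinct in value and sign. -/
theorem stmt_13 (h : ℕ) (hh : 1 ≤ h) (S : Finset (Fin h))
    (a μ : Fin h → ℝ) (ha : ∀ j, a j ≠ 0) :
    IsPE (fun t j =>
        if j ∈ S then a j * μ j * Real.cos (μ j * t) else a j * μ j * Real.sin (μ j * t)) 0
      ↔ ((∀ j, μ j ≠ 0) ∧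
          ∀ i j : Fin h, i ≠ j → ((i ∈ S) ↔ (j ∈ S)) → μ i ≠ μ j ∧ μ i ≠ -μ j) :=
  stmt_13_general h S a μ ha
end
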